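/- arXiv:1308.2373 — 4 statements merged into one kernel-verified Lean document; each statement's English description precedes it below -/
import Mathlib

section
/- For p > 1 and a nonnegative measurable function f on (0,∞) with F(x) = ∫₀ˣ f(t) dt, one has ∫₀^∞ (F(x)/x)^p dx ≤ (p/(p-1))^p ∫₀^∞ f(x)^p dx. -/
/-!
Substituting t = x s gives F(x)/x = ∫₀¹ f(x s) ds. Hölder's inequality on (0, 1] with the weight
s^(1/(pq)), q = p/(p-1), bounds (F(x)/x)^p by q^(p-1) ∫₀¹ f(x s)^p s^(1/q) ds. Integrating in x
and swapping the integrals (Tonelli), the dilation x ↦ x s contributes a factor 1/s, leaving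
q^(p-1) ∫₀¹ s^(-1/p) ds · ∫₀^∞ f^p = q^p ∫₀^∞ f^p. Working in ℝ≥0∞ throughout avoids any
integrability bookkeeping.
-/

open MeasureTheory Set
open scoped ENNReal

theorem setLIntegral_comp_mul_left {c : ℝ} (hc : 0 < c) {s : Set ℝ} (hs : MeasurableSet s)
    (g : ℝ → ℝ≥0∞) :
    ∫⁻ x in s, g (c * x) = ENNReal.ofReal c⁻¹ * ∫⁻ x in (c * ·) '' s, g x := by
  rw [lintegral_image_eq_lintegral_abs_deriv_mul (f := (c * ·)) (f' := fun _ => c) hs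
      (fun x _ => by simpa using ((hasDerivAt_id x).const_mul c).hasDerivWithinAt)
      (mul_right_injective₀ hc.ne').injOn,
    ← lintegral_const_mul' _ _ ENNReal.ofReal_ne_top]
  refine lintegral_congr fun x => ?_
  rw [abs_of_pos hc, ← mul_assoc, ← ENNReal.ofReal_mul (inv_nonneg.2 hc.le),
    inv_mul_cancel₀ hc.ne', ENNReal.ofReal_one, one_mul]

theorem lintegral_Ioc_zero_one_rpow {r : ℝ} (hr : -1 < r) :
    ∫⁻ s in Ioc (0:ℝ) 1, ENNReal.ofReal (s ^ r) = ENNReal.ofReal (r + 1)⁻¹ := by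
  have hint : IntegrableOn (fun s : ℝ => s ^ r) (Ioc 0 1) := by
    rw [← intervalIntegrable_iff_integrableOn_Ioc_of_le zero_le_one]
    exact intervalIntegral.intervalIntegrable_rpow' hr
  rw [← ofReal_integral_eq_lintegral_ofReal hint
    ((ae_restrict_iff' measurableSet_Ioc).2 (.of_forall fun s hs => Real.rpow_nonneg hs.1.le r)),
    ← intervalIntegral.integral_of_le zero_le_one, integral_rpow (.inl hr), Real.one_rpow,
    Real.zero_rpow (by linarith), sub_zero, one_div]

theorem lintegral_rpow_le_of_mul_eq_one {α : Type*} [MeasurableSpace α] {μ : Measure α}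
    {p q : ℝ} (hpq : p.HolderConjugate q) {g u v : α → ℝ≥0∞} (hg : AEMeasurable g μ)
    (hu : AEMeasurable u μ) (hv : AEMeasurable v μ) (huv : ∀ᵐ a ∂μ, u a * v a = 1) :
    (∫⁻ a, g a ∂μ) ^ p ≤ (∫⁻ a, v a ^ q ∂μ) ^ (p - 1) * ∫⁻ a, (g a * u a) ^ p ∂μ := by
  have hg_eq : ∫⁻ a, g a ∂μ = ∫⁻ a, ((fun a => g a * u a) * v) a ∂μ :=
    lintegral_congr_ae <| huv.mono fun a ha => by simp only [Pi.mul_apply, mul_assoc, ha, mul_one]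
  calc (∫⁻ a, g a ∂μ) ^ p
      ≤ ((∫⁻ a, (g a * u a) ^ p ∂μ) ^ (1 / p) * (∫⁻ a, v a ^ q ∂μ) ^ (1 / q)) ^ p := by
        rw [hg_eq]
        exact ENNReal.rpow_le_rpow (ENNReal.lintegral_mul_le_Lp_mul_Lq μ hpq (hg.mul hu) hv)
          hpq.nonneg
    _ = (∫⁻ a, v a ^ q ∂μ) ^ (p - 1) * ∫⁻ a, (g a * u a) ^ p ∂μ := by
        rw [ENNReal.mul_rpow_of_nonneg _ _ hpq.nonneg, ← ENNReal.rpow_mul, ← ENNReal.rpow_mul,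
          one_div_mul_cancel hpq.ne_zero, ENNReal.rpow_one, one_div_mul_eq_div,
          hpq.div_conj_eq_sub_one, mul_comm]

theorem rpow_lintegral_Ioc_zero_one_le {p q : ℝ} (hpq : p.HolderConjugate q) {h : ℝ → ℝ≥0∞}
    (hh : AEMeasurable h (volume.restrict (Ioc 0 1))) :
    (∫⁻ s in Ioc (0:ℝ) 1, h s) ^ p
      ≤ ENNReal.ofReal (q ^ (p - 1)) * ∫⁻ s in Ioc (0:ℝ) 1, h s ^ p * ENNReal.ofReal (s ^ q⁻¹) := by
  set a := (p * q)⁻¹ with ha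
  have weight_eq : ∫⁻ s in Ioc (0:ℝ) 1, ENNReal.ofReal (s ^ (-a)) ^ q = ENNReal.ofReal q := by
    have := lintegral_Ioc_zero_one_rpow (r := -p⁻¹)
      (by linarith [hpq.inv_add_inv_eq_one, inv_pos.2 hpq.symm.pos])
    rw [neg_add_eq_sub, hpq.one_sub_inv, inv_inv] at this
    rw [← this]
    refine setLIntegral_congr_fun measurableSet_Ioc fun s hs => ?_
    rw [ENNReal.ofReal_rpow_of_nonneg (Real.rpow_nonneg hs.1.le _) hpq.symm.nonneg,
      ← Real.rpow_mul hs.1.le]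
    congr 2
    rw [ha]
    field_simp [hpq.symm.ne_zero]
  have product_eq : ∫⁻ s in Ioc (0:ℝ) 1, (h s * ENNReal.ofReal (s ^ a)) ^ p
      = ∫⁻ s in Ioc (0:ℝ) 1, h s ^ p * ENNReal.ofReal (s ^ q⁻¹) := by
    refine setLIntegral_congr_fun measurableSet_Ioc fun s hs => ?_
    rw [ENNReal.mul_rpow_of_nonneg _ _ hpq.nonneg,
      ENNReal.ofReal_rpow_of_nonneg (Real.rpow_nonneg hs.1.le _) hpq.nonneg,
      ← Real.rpow_mul hs.1.le]
    congr 3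
    rw [ha]
    field_simp [hpq.ne_zero]
  rw [← ENNReal.ofReal_rpow_of_nonneg hpq.symm.nonneg hpq.sub_one_pos.le, ← weight_eq,
    ← product_eq]
  refine lintegral_rpow_le_of_mul_eq_one hpq hh (by fun_prop) (by fun_prop) ?_
  refine (ae_restrict_iff' measurableSet_Ioc).2 (.of_forall fun s hs => ?_)
  rw [← ENNReal.ofReal_mul (Real.rpow_nonneg hs.1.le _), ← Real.rpow_add hs.1, add_neg_cancel,
    Real.rpow_zero, ENNReal.ofReal_one]

theorem lintegral_Ioi_rpow_average_le {p q : ℝ} (hpq : p.HolderConjugate q) {g : ℝ → ℝ≥0∞}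
    (hg : Measurable g) :
    ∫⁻ x in Ioi (0:ℝ), (ENNReal.ofReal x⁻¹ * ∫⁻ t in Ioc 0 x, g t) ^ p
      ≤ ENNReal.ofReal (q ^ p) * ∫⁻ x in Ioi (0:ℝ), g x ^ p := by
  set I := ∫⁻ x in Ioi (0:ℝ), g x ^ p
  have average_eq : ∀ x ∈ Ioi (0:ℝ),
      ENNReal.ofReal x⁻¹ * ∫⁻ t in Ioc 0 x, g t = ∫⁻ s in Ioc (0:ℝ) 1, g (x * s) := by
    intro x hx
    rw [setLIntegral_comp_mul_left hx measurableSet_Ioc, image_mul_left_Ioc hx, mul_zero, mul_one]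
  have dilate_eq :
      ∀ s ∈ Ioc (0:ℝ) 1, ∫⁻ x in Ioi (0:ℝ), g (x * s) ^ p = ENNReal.ofReal s⁻¹ * I := by
    intro s hs
    simp_rw [mul_comm _ s]
    rw [setLIntegral_comp_mul_left (g := fun t => g t ^ p) hs.1 measurableSet_Ioi,
      image_const_mul_Ioi_zero hs.1]
  have tonelli : ∫⁻ x in Ioi (0:ℝ), ∫⁻ s in Ioc (0:ℝ) 1, g (x * s) ^ p * ENNReal.ofReal (s ^ q⁻¹)
      = ENNReal.ofReal q * I := by
    rw [lintegral_lintegral_swap (by fun_prop)]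
    calc ∫⁻ s in Ioc (0:ℝ) 1, ∫⁻ x in Ioi (0:ℝ), g (x * s) ^ p * ENNReal.ofReal (s ^ q⁻¹)
        = ∫⁻ s in Ioc (0:ℝ) 1, ENNReal.ofReal (s ^ (-p⁻¹)) * I := by
          refine setLIntegral_congr_fun measurableSet_Ioc fun s hs => ?_
          rw [lintegral_mul_const _ (by fun_prop), dilate_eq s hs, mul_comm, ← mul_assoc,
            ← ENNReal.ofReal_mul (Real.rpow_nonneg hs.1.le _), ← Real.rpow_neg_one s,
            ← Real.rpow_add hs.1, ← hpq.one_sub_inv]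
          ring_nf
      _ = ENNReal.ofReal q * I := by
          rw [lintegral_mul_const _ (by fun_prop), lintegral_Ioc_zero_one_rpow
            (by linarith [hpq.inv_add_inv_eq_one, hpq.symm.inv_pos]), neg_add_eq_sub,
            hpq.one_sub_inv, inv_inv]
  calc ∫⁻ x in Ioi (0:ℝ), (ENNReal.ofReal x⁻¹ * ∫⁻ t in Ioc 0 x, g t) ^ p
      = ∫⁻ x in Ioi (0:ℝ), (∫⁻ s in Ioc (0:ℝ) 1, g (x * s)) ^ p :=
        setLIntegral_congr_fun measurableSet_Ioi fun x hx => by rw [average_eq x hx]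
    _ ≤ ∫⁻ x in Ioi (0:ℝ), ENNReal.ofReal (q ^ (p - 1)) *
          ∫⁻ s in Ioc (0:ℝ) 1, g (x * s) ^ p * ENNReal.ofReal (s ^ q⁻¹) :=
        lintegral_mono fun x => rpow_lintegral_Ioc_zero_one_le hpq (by fun_prop)
    _ = ENNReal.ofReal (q ^ (p - 1)) * (ENNReal.ofReal q * I) := by
        rw [lintegral_const_mul' _ _ ENNReal.ofReal_ne_top, tonelli]
    _ = ENNReal.ofReal (q ^ p) * I := by
        rw [← mul_assoc, ← ENNReal.ofReal_mul (Real.rpow_nonneg hpq.symm.nonneg _),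
          ← Real.rpow_add_one hpq.symm.ne_zero, sub_add_cancel]

theorem ofReal_intervalIntegral_le_setLIntegral {f : ℝ → ℝ} {a b : ℝ} (hab : a ≤ b)
    (hf : ∀ t ∈ Ioc a b, 0 ≤ f t) :
    ENNReal.ofReal (∫ t in a..b, f t) ≤ ∫⁻ t in Ioc a b, ENNReal.ofReal (f t) := by
  rw [intervalIntegral.integral_of_le hab]
  calc ENNReal.ofReal (∫ t in Ioc a b, f t)
      ≤ ‖∫ t in Ioc a b, f t‖ₑ := Real.ofReal_le_enorm _
    _ ≤ ∫⁻ t in Ioc a b, ‖f t‖ₑ := enorm_integral_le_lintegral_enorm _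
    _ = ∫⁻ t in Ioc a b, ENNReal.ofReal (f t) :=
        setLIntegral_congr_fun measurableSet_Ioc fun t ht => Real.enorm_of_nonneg (hf t ht)

theorem hardy_halfline_general (p : ℝ) (hp : 1 < p) (f : ℝ → ℝ) (hf : Measurable f)
    (hpos : ∀ x ∈ Ioi (0:ℝ), 0 ≤ f x) :
    ∫⁻ x in Ioi (0:ℝ), ENNReal.ofReal (((∫ t in (0:ℝ)..x, f t) / x) ^ p)
      ≤ ENNReal.ofReal ((p / (p - 1)) ^ p) * ∫⁻ x in Ioi (0:ℝ), ENNReal.ofReal (f x ^ p) := by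
  have hp0 : 0 ≤ p := by linarith
  have average_bound : ∀ x ∈ Ioi (0:ℝ), ENNReal.ofReal (((∫ t in (0:ℝ)..x, f t) / x) ^ p)
      ≤ (ENNReal.ofReal x⁻¹ * ∫⁻ t in Ioc 0 x, ENNReal.ofReal (f t)) ^ p := by
    intro x hx
    have F_nonneg : 0 ≤ ∫ t in (0:ℝ)..x, f t := by
      rw [intervalIntegral.integral_of_le hx.le]
      exact setIntegral_nonneg measurableSet_Ioc fun t ht => hpos t ht.1
    rw [← ENNReal.ofReal_rpow_of_nonneg (div_nonneg F_nonneg hx.le) hp0, div_eq_inv_mul,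
      ENNReal.ofReal_mul (inv_nonneg.2 hx.le)]
    gcongr
    exact ofReal_intervalIntegral_le_setLIntegral hx.le fun t ht => hpos t ht.1
  have rpow_eq : ∫⁻ x in Ioi (0:ℝ), ENNReal.ofReal (f x ^ p)
      = ∫⁻ x in Ioi (0:ℝ), ENNReal.ofReal (f x) ^ p :=
    setLIntegral_congr_fun measurableSet_Ioi fun x hx =>
      (ENNReal.ofReal_rpow_of_nonneg (hpos x hx) hp0).symm
  rw [rpow_eq]
  exact (setLIntegral_mono' measurableSet_Ioi average_bound).trans
    (lintegral_Ioi_rpow_average_le (.conjExponent hp) hf.ennreal_ofReal)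

theorem hardy_halfline (p : ℝ) (hp : 1 < p) (f : ℝ → ℝ) (hf : Measurable f)
    (hpos : ∀ x ∈ Ioi (0:ℝ), 0 ≤ f x)
    (hfin : ∫⁻ x in Ioi (0:ℝ), ENNReal.ofReal (f x ^ p) < ⊤) :
    ∫⁻ x in Ioi (0:ℝ), ENNReal.ofReal (((∫ t in (0:ℝ)..x, f t) / x) ^ p)
      ≤ ENNReal.ofReal ((p / (p - 1)) ^ p) * ∫⁻ x in Ioi (0:ℝ), ENNReal.ofReal (f x ^ p) :=
  hardy_halfline_general p hp f hf hpos
end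

section
/- For n > p ≥ 1 and every f ∈ C_c^∞(ℝⁿ), ∫_{ℝⁿ} |f(x)|^p / |x|^p dx ≤ (p/(n-p))^p ∫_{ℝⁿ} |∇f(x)|^p dx. -/
open MeasureTheory Set Metric
open scoped ENNReal NNReal

lemma hardy_pointwise {E : Type*} [NormedAddCommGroup E] [NormedSpace ℝ E]
    (f : E → ℝ) (hf : ContDiff ℝ (⊤ : ℕ∞) f) (hsupp : HasCompactSupport f) (x : E) :
    ENNReal.ofReal (|f x| / ‖x‖) ≤ ∫⁻ t in Set.Ioi (1:ℝ), (‖fderiv ℝ f (t • x)‖₊ : ENNReal) := by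
  rcases eq_or_ne x 0 with rfl | hx
  · simp
  have hx0 : 0 < ‖x‖ := norm_pos_iff.mpr hx
  obtain ⟨R, hR⟩ := hsupp.isBounded.subset_closedBall (0 : E)
  set T : ℝ := max R 0 / ‖x‖ + 1 with hTdef
  have h1T : 1 ≤ T := by
    have : 0 ≤ max R 0 / ‖x‖ := div_nonneg (le_max_right _ _) hx0.le
    simp only [hTdef]; linarith
  have hfT : f (T • x) = 0 := by
    apply image_eq_zero_of_notMem_tsupport
    intro hmem
    have h1 : ‖T • x‖ ≤ R := by simpa using hR hmem
    have h2 : ‖T • x‖ = T * ‖x‖ := by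
      rw [norm_smul, Real.norm_eq_abs, abs_of_pos (by linarith)]
    have h3 : T * ‖x‖ = max R 0 + ‖x‖ := by
      rw [hTdef, add_mul, div_mul_cancel₀ _ hx0.ne', one_mul]
    have h4 : R ≤ max R 0 := le_max_left _ _
    rw [h2, h3] at h1
    linarith
  have hdiff := hf.differentiable (by simp)
  have hderiv : ∀ t : ℝ, HasDerivAt (fun s : ℝ => f (s • x)) ((fderiv ℝ f (t • x)) x) t := by
    intro t
    have h1 : HasDerivAt (fun s : ℝ => s • x) ((1:ℝ) • x) t := (hasDerivAt_id t).smul_const x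
    have h2 := (hdiff (t • x)).hasFDerivAt.comp_hasDerivAt t h1
    simp only [one_smul] at h2; exact h2
  have hcont : Continuous fun t : ℝ => (fderiv ℝ f (t • x)) x :=
    ((hf.continuous_fderiv (by simp)).comp (continuous_id.smul continuous_const)).clm_apply
      continuous_const
  have hcont2 : Continuous fun t : ℝ => ‖fderiv ℝ f (t • x)‖ :=
    ((hf.continuous_fderiv (by simp)).comp (continuous_id.smul continuous_const)).norm
  have hftc : ∫ t in (1:ℝ)..T, (fderiv ℝ f (t • x)) x = f (T • x) - f ((1:ℝ) • x) :=
    intervalIntegral.integral_eq_sub_of_hasDerivAt (fun t _ => hderiv t)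
      (hcont.intervalIntegrable 1 T)
  have habs : |f x| ≤ ∫ t in (1:ℝ)..T, ‖fderiv ℝ f (t • x)‖ * ‖x‖ := by
    have h5 : |f x| = ‖∫ t in (1:ℝ)..T, (fderiv ℝ f (t • x)) x‖ := by
      rw [hftc, hfT, one_smul]; simp
    rw [h5]
    refine le_trans (intervalIntegral.norm_integral_le_integral_norm h1T) ?_
    refine intervalIntegral.integral_mono_on h1T (hcont.norm.intervalIntegrable 1 T)
      ((hcont2.mul continuous_const).intervalIntegrable 1 T) (fun t _ => ?_)
    exact (fderiv ℝ f (t • x)).le_opNorm x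
  have hdiv : |f x| / ‖x‖ ≤ ∫ t in (1:ℝ)..T, ‖fderiv ℝ f (t • x)‖ := by
    rw [div_le_iff₀ hx0]
    calc |f x| ≤ ∫ t in (1:ℝ)..T, ‖fderiv ℝ f (t • x)‖ * ‖x‖ := habs
    _ = (∫ t in (1:ℝ)..T, ‖fderiv ℝ f (t • x)‖) * ‖x‖ :=
      intervalIntegral.integral_mul_const _ _
  refine le_trans (ENNReal.ofReal_le_ofReal hdiv) ?_
  rw [intervalIntegral.integral_of_le h1T,
    ofReal_integral_eq_lintegral_ofReal (hcont2.integrableOn_Ioc)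
      (Filter.Eventually.of_forall fun t => norm_nonneg _)]
  refine le_trans (lintegral_mono_set Ioc_subset_Ioi_self) ?_
  exact le_of_eq (lintegral_congr fun t => ofReal_norm _)

theorem hardy_davies_hinz (n : ℕ) (p : ℝ) (hp : 1 ≤ p) (hnp : p < (n : ℝ))
    (f : EuclideanSpace ℝ (Fin n) → ℝ) (hf : ContDiff ℝ (⊤ : ℕ∞) f) (hsupp : HasCompactSupport f) :
    ∫⁻ x, ENNReal.ofReal (|f x| ^ p / ‖x‖ ^ p)
      ≤ ENNReal.ofReal ((p / ((n : ℝ) - p)) ^ p) * ∫⁻ x, ENNReal.ofReal (‖fderiv ℝ f x‖ ^ p) := by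
  have hp0 : (0:ℝ) < p := lt_of_lt_of_le one_pos hp
  have hnp0 : (0:ℝ) < (n:ℝ) - p := by linarith
  have hDf_cont : Continuous (fderiv ℝ f) := hf.continuous_fderiv (by simp)
  set g : EuclideanSpace ℝ (Fin n) → ℝ≥0∞ := fun x => ENNReal.ofReal (|f x| / ‖x‖) with hgdef
  set G : EuclideanSpace ℝ (Fin n) → ℝ≥0∞ := fun y => (‖fderiv ℝ f y‖₊ : ℝ≥0∞) ^ p with hGdef
  set D : ℝ≥0∞ := ∫⁻ y, G y with hDdef
  set Φ : ℝ → EuclideanSpace ℝ (Fin n) → ℝ≥0∞ := fun t x => (‖fderiv ℝ f (t • x)‖₊ : ℝ≥0∞) with hΦdef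
  have hg_meas : Measurable g :=
    ENNReal.measurable_ofReal.comp (hf.continuous.abs.measurable.div continuous_norm.measurable)
  have hG_meas : Measurable G := by
    have : Measurable fun y : EuclideanSpace ℝ (Fin n) => (‖fderiv ℝ f y‖₊ : ℝ≥0∞) :=
      measurable_coe_nnreal_ennreal.comp hDf_cont.nnnorm.measurable
    fun_prop
  have hΦx_meas : ∀ x : EuclideanSpace ℝ (Fin n), Measurable fun t : ℝ => Φ t x := fun x =>
    measurable_coe_nnreal_ennreal.comp
      ((hDf_cont.comp (continuous_id.smul continuous_const)).nnnorm.measurable)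
  have hΦt_meas : ∀ t : ℝ, Measurable fun x : EuclideanSpace ℝ (Fin n) => Φ t x := fun t =>
    measurable_coe_nnreal_ennreal.comp
      ((hDf_cont.comp (continuous_const_smul t)).nnnorm.measurable)
  -- rewriting LHS
  have hLHS : ∫⁻ x, ENNReal.ofReal (|f x| ^ p / ‖x‖ ^ p) = ∫⁻ x, g x ^ p := by
    refine lintegral_congr fun x => ?_
    rcases eq_or_lt_of_le (norm_nonneg x) with hx | hx
    · rw [hgdef]
      simp only [← hx, Real.zero_rpow hp0.ne', div_zero, ENNReal.ofReal_zero]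
      rw [ENNReal.zero_rpow_of_pos hp0]
    · rw [hgdef, ← Real.div_rpow (abs_nonneg _) (norm_nonneg _),
        ENNReal.ofReal_rpow_of_nonneg (div_nonneg (abs_nonneg _) (norm_nonneg _)) hp0.le]
  -- rewriting RHS
  have hRHS : ∫⁻ x, ENNReal.ofReal (‖fderiv ℝ f x‖ ^ p) = D := by
    refine lintegral_congr fun y => ?_
    rw [← ENNReal.ofReal_rpow_of_nonneg (norm_nonneg _) hp0.le, ofReal_norm, enorm_eq_nnnorm]
  have key : ∀ x : EuclideanSpace ℝ (Fin n), g x ≤ ∫⁻ t in Ioi (1:ℝ), Φ t x := hardy_pointwise f hf hsupp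
  -- scaling
  have hscale : ∀ t : ℝ, 0 < t →
      ∫⁻ x, Φ t x ^ p = ENNReal.ofReal ((t ^ n : ℝ))⁻¹ * D := by
    intro t ht
    have h1 : ∫⁻ x, Φ t x ^ p = ∫⁻ y, G y ∂(Measure.map (fun x : EuclideanSpace ℝ (Fin n) => t • x) volume) := by
      rw [lintegral_map hG_meas (measurable_const_smul t)]
    rw [h1, Measure.map_addHaar_smul volume ht.ne', lintegral_smul_measure, ← hDdef,
      finrank_euclideanSpace_fin, abs_of_pos (by positivity), smul_eq_mul]
  -- the t-integral
  have hJ : ∫⁻ t in Ioi (1:ℝ), ENNReal.ofReal (t ^ (-((n:ℝ)/p)))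
      = ENNReal.ofReal (p / ((n:ℝ) - p)) := by
    have hc : -((n:ℝ)/p) < -1 := by
      rw [neg_lt_neg_iff]
      exact (one_lt_div hp0).mpr hnp
    rw [← ofReal_integral_eq_lintegral_ofReal (integrableOn_Ioi_rpow_of_lt hc one_pos) ?_]
    · rw [integral_Ioi_rpow_of_lt hc one_pos, Real.one_rpow]
      congr 1
      rw [show -((n:ℝ)/p) + 1 = -(((n:ℝ) - p)/p) by field_simp; ring, neg_div_neg_eq, one_div_div]
    · filter_upwards [ae_restrict_mem measurableSet_Ioi] with t ht
      exact Real.rpow_nonneg (by linarith [mem_Ioi.mp ht]) _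
  -- truncations
  set m : ℕ → EuclideanSpace ℝ (Fin n) → ℝ≥0∞ := fun k x => min (g x) k with hmdef
  have hm_meas : ∀ k : ℕ, Measurable (m k) := fun k => hg_meas.min measurable_const
  set L : ℕ → ℝ≥0∞ := fun k => ∫⁻ x, m k x ^ p with hLdef
  have hm_ne_top : ∀ k x, m k x ≠ ⊤ := fun k x =>
    ne_top_of_le_ne_top (ENNReal.natCast_ne_top k) (min_le_right _ _)
  have hLfin : ∀ k, L k ≠ ⊤ := by
    intro k
    have hbound : ∀ x, m k x ^ p ≤ (tsupport f).indicator (fun _ => (k : ℝ≥0∞) ^ p) x := by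
      intro x
      by_cases hx : x ∈ tsupport f
      · simp only [indicator_of_mem hx]
        exact ENNReal.rpow_le_rpow (min_le_right _ _) hp0.le
      · have hfx : f x = 0 := image_eq_zero_of_notMem_tsupport hx
        have hgx : g x = 0 := by simp [hgdef, hfx]
        have hm0 : m k x = 0 := by simp [hmdef, hgx]
        simp [indicator_of_notMem hx, hm0, ENNReal.zero_rpow_of_pos hp0]
    refine ne_top_of_le_ne_top ?_ (lintegral_mono hbound)
    rw [lintegral_indicator (isClosed_tsupport f).measurableSet, setLIntegral_const]
    exact ENNReal.mul_ne_top (ENNReal.rpow_ne_top_of_nonneg hp0.le (ENNReal.natCast_ne_top k))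
      hsupp.measure_lt_top.ne
  -- monotone convergence
  have hsup : ∫⁻ x, g x ^ p = ⨆ k, L k := by
    have hptwise : ∀ x, g x ^ p = ⨆ k : ℕ, m k x ^ p := by
      intro x
      refine le_antisymm ?_ (iSup_le fun k => ENNReal.rpow_le_rpow (min_le_left _ _) hp0.le)
      obtain ⟨k, hk⟩ := ENNReal.exists_nat_gt (show g x ≠ ⊤ from ENNReal.ofReal_ne_top)
      calc g x ^ p = m k x ^ p := by rw [hmdef]; simp only [min_eq_left hk.le]
      _ ≤ ⨆ k : ℕ, m k x ^ p := le_iSup (fun k : ℕ => m k x ^ p) k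
    rw [lintegral_congr hptwise, lintegral_iSup (fun k => by fun_prop) ?_]
    intro a b hab x
    exact ENNReal.rpow_le_rpow (min_le_min le_rfl (Nat.cast_le.mpr hab)) hp0.le
  -- Hölder step
  have hhold : ∀ (k : ℕ) (t : ℝ), ∫⁻ x, Φ t x * m k x ^ (p - 1)
      ≤ (∫⁻ x, Φ t x ^ p) ^ (1/p) * (L k) ^ (1 - 1/p) := by
    intro k t
    rcases eq_or_lt_of_le hp with hp1 | hp1
    · simp only [← hp1, sub_self, ENNReal.rpow_zero, mul_one, one_div_one, ENNReal.rpow_one,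
        div_self (one_ne_zero : (1:ℝ) ≠ 0)]
      exact le_refl _
    · have hpq := Real.HolderConjugate.conjExponent hp1
      set q := Real.conjExponent p with hqdef
      have hq1 : (p - 1) * q = p := by
        have hne : p - 1 ≠ 0 := by linarith
        rw [hqdef, Real.conjExponent]
        field_simp
      have hq2 : 1/q = 1 - 1/p := by
        have := hpq.inv_add_inv_eq_one
        rw [inv_eq_one_div, inv_eq_one_div] at this
        linarith
      calc ∫⁻ x, Φ t x * m k x ^ (p - 1)
          ≤ (∫⁻ x, Φ t x ^ p) ^ (1/p) * (∫⁻ x, (m k x ^ (p - 1)) ^ q) ^ (1/q) :=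
            ENNReal.lintegral_mul_le_Lp_mul_Lq volume hpq (hΦt_meas t).aemeasurable
              (by fun_prop)
        _ = (∫⁻ x, Φ t x ^ p) ^ (1/p) * (L k) ^ (1 - 1/p) := by
            rw [hq2, hLdef]
            congr 1
            refine congrArg (· ^ (1 - 1/p)) (lintegral_congr fun x => ?_)
            rw [← ENNReal.rpow_mul, hq1]
  -- main estimate for each truncation
  have hmain : ∀ k : ℕ, L k ≤ ENNReal.ofReal (p / ((n:ℝ) - p)) * D ^ (1/p) * (L k) ^ (1 - 1/p) := by
    intro k
    have hsplit : ∀ a : ℝ≥0∞, a ≠ ⊤ → a ^ p = a * a ^ (p - 1) := by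
      intro a ha
      rcases eq_or_ne a 0 with rfl | h0
      · rw [ENNReal.zero_rpow_of_pos hp0, zero_mul]
      · conv_lhs => rw [show p = 1 + (p - 1) by ring]
        rw [ENNReal.rpow_add _ _ h0 ha, ENNReal.rpow_one]
    calc L k = ∫⁻ x, m k x * m k x ^ (p - 1) :=
          lintegral_congr fun x => hsplit _ (hm_ne_top k x)
      _ ≤ ∫⁻ x, (∫⁻ t in Ioi (1:ℝ), Φ t x) * m k x ^ (p - 1) :=
          lintegral_mono fun x =>
            mul_le_mul_left (le_trans (min_le_left _ _) (key x)) _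
      _ = ∫⁻ x, ∫⁻ t in Ioi (1:ℝ), Φ t x * m k x ^ (p - 1) :=
          lintegral_congr fun x => (lintegral_mul_const _ (hΦx_meas x)).symm
      _ = ∫⁻ t in Ioi (1:ℝ), ∫⁻ x, Φ t x * m k x ^ (p - 1) := by
          refine lintegral_lintegral_swap ?_
          apply Measurable.aemeasurable
          apply Measurable.mul
          · exact measurable_coe_nnreal_ennreal.comp
              ((hDf_cont.comp (continuous_snd.smul continuous_fst)).nnnorm.measurable)
          · exact (((hm_meas k).comp measurable_fst).pow_const _)
      _ ≤ ∫⁻ t in Ioi (1:ℝ), ENNReal.ofReal (t ^ (-((n:ℝ)/p))) * (D ^ (1/p) * (L k) ^ (1 - 1/p)) := by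
          refine setLIntegral_mono' measurableSet_Ioi fun t ht => ?_
          have ht0 : (0:ℝ) < t := lt_trans one_pos (mem_Ioi.mp ht)
          refine le_trans (hhold k t) ?_
          rw [hscale t ht0, ENNReal.mul_rpow_of_nonneg _ _ (by positivity : (0:ℝ) ≤ 1/p),
            ENNReal.ofReal_rpow_of_pos (by positivity : (0:ℝ) < (t ^ n : ℝ)⁻¹)]
          have hrp : ((t ^ n : ℝ)⁻¹) ^ (1/p) = t ^ (-((n:ℝ)/p)) := by
            rw [← Real.rpow_natCast t n, ← Real.rpow_neg ht0.le, ← Real.rpow_mul ht0.le]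
            congr 1
            field_simp
          rw [hrp, mul_assoc]
      _ = (∫⁻ t in Ioi (1:ℝ), ENNReal.ofReal (t ^ (-((n:ℝ)/p)))) * (D ^ (1/p) * (L k) ^ (1 - 1/p)) :=
          lintegral_mul_const _ (by fun_prop)
      _ = ENNReal.ofReal (p / ((n:ℝ) - p)) * D ^ (1/p) * (L k) ^ (1 - 1/p) := by
          rw [hJ, mul_assoc]
  -- cancellation
  have hfinal : ∀ k : ℕ, L k ≤ ENNReal.ofReal ((p / ((n:ℝ) - p)) ^ p) * D := by
    intro k
    rcases eq_or_ne (L k) 0 with h0 | h0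
    · rw [h0]; exact zero_le
    have hLk_top := hLfin k
    have hfac0 : (L k) ^ (1 - 1/p) ≠ 0 := by
      rw [Ne, ENNReal.rpow_eq_zero_iff]
      push_neg
      exact ⟨fun h => absurd h h0, fun h => absurd h hLk_top⟩
    have hfact : (L k) ^ (1 - 1/p) ≠ ⊤ := ENNReal.rpow_ne_top_of_nonneg (by
      rw [sub_nonneg]
      rw [div_le_one hp0]
      exact hp) hLk_top
    have h1 : L k = (L k) ^ (1/p) * (L k) ^ (1 - 1/p) := by
      rw [← ENNReal.rpow_add _ _ h0 hLk_top, show 1/p + (1 - 1/p) = 1 by ring, ENNReal.rpow_one]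
    have h2 : (L k) ^ (1/p) ≤ ENNReal.ofReal (p / ((n:ℝ) - p)) * D ^ (1/p) := by
      rw [← ENNReal.mul_le_mul_iff_left hfac0 hfact, ← h1]
      exact hmain k
    calc L k = ((L k) ^ (1/p)) ^ p := by
          rw [← ENNReal.rpow_mul, one_div_mul_cancel hp0.ne', ENNReal.rpow_one]
      _ ≤ (ENNReal.ofReal (p / ((n:ℝ) - p)) * D ^ (1/p)) ^ p := ENNReal.rpow_le_rpow h2 hp0.le
      _ = ENNReal.ofReal ((p / ((n:ℝ) - p)) ^ p) * D := by
          rw [ENNReal.mul_rpow_of_nonneg _ _ hp0.le,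
            ENNReal.ofReal_rpow_of_pos (div_pos hp0 hnp0), ← ENNReal.rpow_mul,
            one_div_mul_cancel hp0.ne', ENNReal.rpow_one]
  rw [hLHS, hRHS, hsup]
  exact iSup_le hfinal
end

section
/- Let P : ℝⁿ → ℝ be strictly positive with ∫ P = 1, and define F₀(x) = ∫₀^∞ t^{-n/2} P(t^{-1/2} x) dt/t for x ≠ 0. Then the function N(x) = F₀(x)^{-1/n} for x ≠ 0, N(0) = 0, is homogeneous of degree 1 (N(rx) = r N(x) for r > 0), nonnegative, continuous, and vanishes only at the origin. -/
/-!
With `F₀ = dilationIntegral n P`, the substitution `t ↦ r² t` gives `F₀ (r • x) = r⁻ⁿ F₀ x`,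
which is exactly degree-one homogeneity of `F₀ ^ (-1/n)`. On `{‖x‖ ≥ a}` the integrand is bounded
by a constant for `t ≤ 1` (decay of `P` of order `n + 2`, as
`t ^ (-n/2 - 1) = (t ^ (-1/2)) ^ (n + 2)`) and by a multiple of `t ^ (-n/2 - 1)` for `t ≥ 1`
(boundedness of `P`; integrable as `n > 0`), so dominated convergence makes `F₀` positive and
continuous off the origin. Continuity at the origin then follows from homogeneity and the
compactness of the unit sphere.
-/

open MeasureTheory Set Filter Topology

lemma integrableOn_min_one_rpow {e : ℝ} (he : e < -1) :
    IntegrableOn (fun t : ℝ => min 1 (t ^ e)) (Ioi 0) := by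
  rw [← Ioc_union_Ioi_eq_Ioi zero_le_one]
  refine IntegrableOn.union ?_ ?_
  · refine (integrableOn_const (C := (1 : ℝ)) measure_Ioc_lt_top.ne).congr_fun (fun t ht => ?_)
      measurableSet_Ioc
    exact (min_eq_left (Real.one_le_rpow_of_pos_of_le_one_of_nonpos ht.1 ht.2 (by linarith))).symm
  · refine (integrableOn_Ioi_rpow_of_lt he zero_lt_one).congr_fun (fun t ht => ?_) measurableSet_Ioi
    exact (min_eq_right (Real.rpow_le_one_of_one_le_of_nonpos (le_of_lt ht) (by linarith))).symm

section Dilation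

variable {E : Type*} [NormedAddCommGroup E] [NormedSpace ℝ E]

noncomputable def dilationIntegrand (n : ℕ) (P : E → ℝ) (x : E) (t : ℝ) : ℝ :=
  t ^ (-(n : ℝ) / 2) * P (t ^ (-(1 : ℝ) / 2) • x) / t

noncomputable def dilationIntegral (n : ℕ) (P : E → ℝ) (x : E) : ℝ :=
  ∫ t in Ioi (0 : ℝ), dilationIntegrand n P x t

/-- Up to a constant factor, dominates `dilationIntegrand n P x` uniformly on `{‖x‖ ≥ a}`. -/
noncomputable def dilationBound (n : ℕ) (t : ℝ) : ℝ :=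
  min 1 (t ^ (-(n : ℝ) / 2 - 1))

variable {n : ℕ} {P : E → ℝ}

lemma dilationIntegrand_pos (hP : ∀ y, 0 < P y) (x : E) {t : ℝ} (ht : 0 < t) :
    0 < dilationIntegrand n P x t :=
  div_pos (mul_pos (Real.rpow_pos_of_pos ht _) (hP _)) ht

lemma continuous_dilationIntegrand_left (hP : Continuous P) (t : ℝ) :
    Continuous fun x => dilationIntegrand n P x t := by
  unfold dilationIntegrand
  fun_prop

lemma continuousOn_dilationIntegrand (hP : Continuous P) (x : E) :
    ContinuousOn (dilationIntegrand n P x) (Ioi (0 : ℝ)) := by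
  refine continuousOn_of_forall_continuousAt fun t ht => ?_
  have hrpow (q : ℝ) : ContinuousAt (· ^ q) t := Real.continuousAt_rpow_const _ _ (.inl ht.ne')
  exact ((hrpow _).mul (hP.continuousAt.comp ((hrpow _).smul continuousAt_const))).div
    continuousAt_id ht.ne'

lemma norm_dilationIntegrand (x : E) {t : ℝ} (ht : 0 < t) :
    ‖dilationIntegrand n P x t‖ = t ^ (-(n : ℝ) / 2 - 1) * |P (t ^ (-(1 : ℝ) / 2) • x)| := by
  rw [dilationIntegrand, Real.norm_eq_abs, abs_div, abs_mul, abs_of_pos (by positivity),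
    abs_of_pos ht, Real.rpow_sub_one ht.ne']
  ring

lemma norm_dilationIntegrand_le_of_decay {C a : ℝ} (ha : 0 < a)
    (hC : ∀ y, ‖y‖ ^ (n + 2) * |P y| ≤ C) {x : E} (hax : a ≤ ‖x‖) {t : ℝ} (ht : 0 < t) :
    ‖dilationIntegrand n P x t‖ ≤ C / a ^ (n + 2) := by
  set s := t ^ (-(1 : ℝ) / 2)
  have hs : 0 < s := by positivity
  have hsa : s * a ≤ ‖s • x‖ := by
    rw [norm_smul, Real.norm_of_nonneg hs.le]
    exact mul_le_mul_of_nonneg_left hax hs.le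
  have hts : t ^ (-(n : ℝ) / 2 - 1) = s ^ (n + 2) := by
    rw [← Real.rpow_natCast, ← Real.rpow_mul ht.le]
    congr 1
    push_cast
    ring
  rw [norm_dilationIntegrand x ht, le_div_iff₀ (by positivity), hts]
  calc s ^ (n + 2) * |P (s • x)| * a ^ (n + 2) = (s * a) ^ (n + 2) * |P (s • x)| := by ring
    _ ≤ ‖s • x‖ ^ (n + 2) * |P (s • x)| := by gcongr
    _ ≤ C := hC _

lemma norm_dilationIntegrand_le_of_bound {M : ℝ} (hM : ∀ y, |P y| ≤ M) (x : E) {t : ℝ}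
    (ht : 0 < t) : ‖dilationIntegrand n P x t‖ ≤ M * t ^ (-(n : ℝ) / 2 - 1) := by
  rw [norm_dilationIntegrand x ht, mul_comm M]
  gcongr
  exact hM _

lemma norm_dilationIntegrand_le {C M a : ℝ} (ha : 0 < a) (hC : ∀ y, ‖y‖ ^ (n + 2) * |P y| ≤ C)
    (hM : ∀ y, |P y| ≤ M) {x : E} (hax : a ≤ ‖x‖) {t : ℝ} (ht : 0 < t) :
    ‖dilationIntegrand n P x t‖ ≤ max (C / a ^ (n + 2)) M * dilationBound n t := by
  have hM0 : 0 ≤ M := (abs_nonneg _).trans (hM x)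
  rw [dilationBound, mul_min_of_nonneg _ _ (hM0.trans (le_max_right _ _)), mul_one]
  refine le_min ((norm_dilationIntegrand_le_of_decay ha hC hax ht).trans (le_max_left _ _)) ?_
  exact (norm_dilationIntegrand_le_of_bound hM x ht).trans (by gcongr; exact le_max_right _ _)

lemma integrableOn_dilationBound (hn : 0 < n) : IntegrableOn (dilationBound n) (Ioi 0) := by
  have hn' : (0 : ℝ) < n := Nat.cast_pos.2 hn
  exact integrableOn_min_one_rpow (by linarith)

lemma integrableOn_dilationIntegrand (hn : 0 < n) (hP : Continuous P) {C M : ℝ}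
    (hC : ∀ y, ‖y‖ ^ (n + 2) * |P y| ≤ C) (hM : ∀ y, |P y| ≤ M) {x : E} (hx : x ≠ 0) :
    IntegrableOn (dilationIntegrand n P x) (Ioi 0) :=
  ((integrableOn_dilationBound hn).const_mul _).mono'
    ((continuousOn_dilationIntegrand hP x).aestronglyMeasurable measurableSet_Ioi)
    ((ae_restrict_iff' measurableSet_Ioi).2 (ae_of_all _ fun _ ht =>
      norm_dilationIntegrand_le (norm_pos_iff.2 hx) hC hM le_rfl ht))

lemma dilationIntegral_pos (hP : ∀ y, 0 < P y) {x : E}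
    (hint : IntegrableOn (dilationIntegrand n P x) (Ioi 0)) : 0 < dilationIntegral n P x := by
  have hnonneg : 0 ≤ᵐ[volume.restrict (Ioi 0)] dilationIntegrand n P x :=
    (ae_restrict_iff' measurableSet_Ioi).2
      (ae_of_all _ fun _ ht => (dilationIntegrand_pos hP x ht).le)
  have hsupp : Function.support (dilationIntegrand n P x) ∩ Ioi 0 = Ioi 0 :=
    inter_eq_right.2 fun _ ht => (dilationIntegrand_pos hP x (mem_Ioi.1 ht)).ne'
  rw [dilationIntegral, setIntegral_pos_iff_support_of_nonneg_ae hnonneg hint, hsupp]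
  simp

lemma dilationIntegrand_smul_mul_sq {r : ℝ} (hr : 0 < r) (x : E) {u : ℝ} (hu : 0 < u) :
    dilationIntegrand n P (r • x) (u * r ^ 2) =
      r ^ (-(n : ℝ)) * dilationIntegrand n P x u / r ^ 2 := by
  have hr2 : (r ^ 2) ^ (-(1 : ℝ) / 2) = r⁻¹ := by
    rw [← Real.rpow_natCast, ← Real.rpow_mul hr.le]; norm_num [Real.rpow_neg_one]
  have hrn : (r ^ 2) ^ (-(n : ℝ) / 2) = r ^ (-(n : ℝ)) := by
    rw [← Real.rpow_natCast, ← Real.rpow_mul hr.le]; push_cast; ring_nf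
  simp only [dilationIntegrand]
  rw [Real.mul_rpow hu.le (by positivity), Real.mul_rpow hu.le (by positivity), hr2, hrn,
    mul_smul, inv_smul_smul₀ hr.ne']
  field_simp

lemma dilationIntegral_smul {r : ℝ} (hr : 0 < r) (x : E) :
    dilationIntegral n P (r • x) = r ^ (-(n : ℝ)) * dilationIntegral n P x := by
  have h := integral_comp_mul_right_Ioi (dilationIntegrand n P (r • x)) 0 (pow_pos hr 2)
  rw [zero_mul, setIntegral_congr_fun measurableSet_Ioi
    (fun u hu => dilationIntegrand_smul_mul_sq hr x hu), integral_div, integral_const_mul,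
    smul_eq_mul] at h
  unfold dilationIntegral
  field_simp at h
  linarith

lemma continuousAt_dilationIntegral (hn : 0 < n) (hP : Continuous P) {C M : ℝ}
    (hC : ∀ y, ‖y‖ ^ (n + 2) * |P y| ≤ C) (hM : ∀ y, |P y| ≤ M) {x₀ : E} (hx₀ : x₀ ≠ 0) :
    ContinuousAt (dilationIntegral n P) x₀ := by
  have ha : 0 < ‖x₀‖ / 2 := half_pos (norm_pos_iff.2 hx₀)
  have hnear : ∀ᶠ x in 𝓝 x₀, ‖x₀‖ / 2 ≤ ‖x‖ :=
    (continuous_norm.tendsto x₀).eventually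
      (eventually_ge_nhds (half_lt_self (norm_pos_iff.2 hx₀)))
  refine continuousAt_of_dominated
    (bound := fun t => max (C / (‖x₀‖ / 2) ^ (n + 2)) M * dilationBound n t)
    (Eventually.of_forall fun x =>
      (continuousOn_dilationIntegrand hP x).aestronglyMeasurable measurableSet_Ioi) ?_
    ((integrableOn_dilationBound hn).const_mul _)
    (ae_of_all _ fun t => (continuous_dilationIntegrand_left hP t).continuousAt)
  filter_upwards [hnear] with x hx
  exact (ae_restrict_iff' measurableSet_Ioi).2 (ae_of_all _ fun t ht =>
    norm_dilationIntegrand_le ha hC hM hx ht)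

end Dilation

theorem continuous_of_homogeneous {E : Type*} [NormedAddCommGroup E] [NormedSpace ℝ E]
    [ProperSpace E] {N : E → ℝ} (hhom : ∀ r : ℝ, 0 < r → ∀ x, N (r • x) = r * N x)
    (hcont : ∀ x, x ≠ 0 → ContinuousAt N x) : Continuous N := by
  have hN0 : N 0 = 0 := by
    have h := hhom 2 two_pos 0
    rw [smul_zero] at h
    linarith
  obtain ⟨B, hB⟩ := (isCompact_sphere (0 : E) 1).exists_bound_of_continuousOn fun u hu =>
    (hcont u (ne_zero_of_mem_unit_sphere ⟨u, hu⟩)).continuousWithinAt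
  have hbound : ∀ x, ‖N x‖ ≤ B * ‖x‖ := by
    intro x
    rcases eq_or_ne x 0 with rfl | hx
    · simp [hN0]
    have hx' : 0 < ‖x‖ := norm_pos_iff.2 hx
    have hu : ‖x‖⁻¹ • x ∈ Metric.sphere (0 : E) 1 := by simp [norm_smul, hx'.ne']
    calc ‖N x‖ = ‖N (‖x‖ • ‖x‖⁻¹ • x)‖ := by rw [smul_inv_smul₀ hx'.ne']
      _ = ‖x‖ * ‖N (‖x‖⁻¹ • x)‖ := by rw [hhom _ hx', norm_mul, norm_norm]
      _ ≤ ‖x‖ * B := by gcongr; exact hB _ hu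
      _ = B * ‖x‖ := mul_comm _ _
  refine continuous_iff_continuousAt.2 fun x => ?_
  rcases eq_or_ne x 0 with rfl | hx
  · rw [ContinuousAt, hN0]
    refine squeeze_zero_norm hbound ?_
    simpa using tendsto_norm_zero.const_mul B
  · exact hcont x hx

theorem homogeneous_norm_from_kernel_general (n : ℕ) (hn : 0 < n)
    (P : SchwartzMap (EuclideanSpace ℝ (Fin n)) ℝ) (hPpos : ∀ x, 0 < P x)
    (N : EuclideanSpace ℝ (Fin n) → ℝ)
    (hN : ∀ x : EuclideanSpace ℝ (Fin n), x ≠ 0 →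
      N x = (∫ t in Ioi (0:ℝ), t ^ (-(n : ℝ)/2) * P ((t ^ (-(1:ℝ)/2)) • x) / t)
              ^ (-(1:ℝ) / (n : ℝ)))
    (hN0 : N 0 = 0) :
    (∀ r : ℝ, 0 < r → ∀ x, N (r • x) = r * N x) ∧ (∀ x, 0 ≤ N x) ∧ Continuous N ∧
      ∀ x, N x = 0 ↔ x = 0 := by
  obtain ⟨C, -, hC⟩ := P.decay (n + 2) 0
  obtain ⟨M, -, hM⟩ := P.decay 0 0
  simp only [norm_iteratedFDeriv_zero, pow_zero, one_mul, Real.norm_eq_abs] at hC hM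
  have hNF : ∀ x, x ≠ 0 → N x = dilationIntegral n P x ^ (-(1 : ℝ) / n) := hN
  have hF : ∀ x, x ≠ 0 → 0 < dilationIntegral n P x := fun x hx =>
    dilationIntegral_pos hPpos (integrableOn_dilationIntegrand hn P.continuous hC hM hx)
  have hNpos : ∀ x, x ≠ 0 → 0 < N x := fun x hx => by
    rw [hNF x hx]; exact Real.rpow_pos_of_pos (hF x hx) _
  have hhom : ∀ r : ℝ, 0 < r → ∀ x, N (r • x) = r * N x := by
    intro r hr x
    rcases eq_or_ne x 0 with rfl | hx
    · simp [hN0]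
    have hn' : (n : ℝ) ≠ 0 := Nat.cast_ne_zero.2 hn.ne'
    rw [hNF _ (smul_ne_zero hr.ne' hx), hNF x hx, dilationIntegral_smul hr,
      Real.mul_rpow (by positivity) (hF x hx).le, ← Real.rpow_mul hr.le,
      show -(n : ℝ) * (-1 / n) = 1 by field_simp, Real.rpow_one]
  have hcont : Continuous N := continuous_of_homogeneous hhom fun x hx =>
    ((Real.continuousAt_rpow_const _ _ (.inl (hF x hx).ne')).comp
      (continuousAt_dilationIntegral hn P.continuous hC hM hx)).congr
      ((eventually_ne_nhds hx).mono fun y hy => (hNF y hy).symm)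
  refine ⟨hhom, fun x => ?_, hcont, fun x => ⟨fun h => ?_, fun h => h ▸ hN0⟩⟩
  · rcases eq_or_ne x 0 with rfl | hx
    exacts [hN0.ge, (hNpos x hx).le]
  · by_contra hx
    exact (hNpos x hx).ne' h

theorem homogeneous_norm_from_kernel (n : ℕ) (hn : 0 < n)
    (P : SchwartzMap (EuclideanSpace ℝ (Fin n)) ℝ) (hPpos : ∀ x, 0 < P x)
    (hPint : ∫ x, P x = 1) (N : EuclideanSpace ℝ (Fin n) → ℝ)
    (hN : ∀ x : EuclideanSpace ℝ (Fin n), x ≠ 0 →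
      N x = (∫ t in Ioi (0:ℝ), t ^ (-(n : ℝ)/2) * P ((t ^ (-(1:ℝ)/2)) • x) / t)
              ^ (-(1:ℝ) / (n : ℝ)))
    (hN0 : N 0 = 0) :
    (∀ r : ℝ, 0 < r → ∀ x, N (r • x) = r * N x) ∧ (∀ x, 0 ≤ N x) ∧ Continuous N ∧
      ∀ x, N x = 0 ↔ x = 0 :=
  homogeneous_norm_from_kernel_general n hn P hPpos N hN hN0
end

section
/- Let n ≥ 1, 1 < p < ∞, and 0 < α < n/p. Then the operator T_α f(x) = |x|^{-α} (f * I_α)(x), where I_α(x) = c_{n,α} |x|^{α-n} is the Riesz potential kernel on ℝⁿ with c_{n,α} = Γ((n-α)/2) / (2^α π^{n/2} Γ(α/2)), extends from C_c^∞(ℝⁿ) to a bounded operator on L^p(ℝⁿ). -/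
open MeasureTheory Set ENNReal

/-- Scaling change of variables for lower integrals on Euclidean space. -/
lemma lintegral_scale_euclidean {n : ℕ} (G : EuclideanSpace ℝ (Fin n) → ℝ≥0∞)
    (hG : Measurable G) {r : ℝ} (hr : 0 < r) :
    ∫⁻ y, G y = ENNReal.ofReal (r ^ n) * ∫⁻ z, G (r • z) := by
  have hmap := Measure.map_addHaar_smul (volume : Measure (EuclideanSpace ℝ (Fin n))) hr.ne'
  have h1 : ∫⁻ z, G (r • z) = ∫⁻ y, G y ∂(Measure.map (fun z => r • z) volume) :=
    (lintegral_map hG (measurable_const_smul r)).symm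
  rw [hmap, lintegral_smul_measure, finrank_euclideanSpace_fin, smul_eq_mul] at h1
  rw [h1, ← mul_assoc, ← ENNReal.ofReal_mul (by positivity),
    abs_of_nonneg (by positivity), mul_inv_cancel₀ (by positivity),
    ENNReal.ofReal_one, one_mul]

/-- Finiteness of the integral of a negative power of the norm over a ball. -/
lemma lint_ball_lt_top {n : ℕ} {b : ℝ} (hb : -(n : ℝ) < b) (hb0 : b < 0) (R : ℝ) :
    ∫⁻ z in Metric.ball (0 : EuclideanSpace ℝ (Fin n)) R, ENNReal.ofReal (‖z‖ ^ b) < ⊤ := by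
  set E := EuclideanSpace ℝ (Fin n)
  have hmeas : AEMeasurable (fun z : E => ‖z‖ ^ b)
      (volume.restrict (Metric.ball (0 : E) R)) := by fun_prop
  rw [lintegral_eq_lintegral_meas_le _
    (Filter.Eventually.of_forall fun z => Real.rpow_nonneg (norm_nonneg _) _) hmeas]
  have hbound1 : ∀ t : ℝ, (volume.restrict (Metric.ball (0 : E) R)) {a | t ≤ ‖a‖ ^ b}
      ≤ volume (Metric.ball (0 : E) R) := by
    intro t
    calc (volume.restrict (Metric.ball (0 : E) R)) {a | t ≤ ‖a‖ ^ b}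
        ≤ (volume.restrict (Metric.ball (0 : E) R)) univ := measure_mono (subset_univ _)
      _ = volume (Metric.ball (0 : E) R) := by
          rw [Measure.restrict_apply_univ]
  have hbound2 : ∀ t : ℝ, 0 < t → (volume.restrict (Metric.ball (0 : E) R)) {a | t ≤ ‖a‖ ^ b}
      ≤ ENNReal.ofReal (t ^ (b⁻¹ * n)) * volume (Metric.ball (0 : E) 1) := by
    intro t ht
    have hsub : {a : E | t ≤ ‖a‖ ^ b} ⊆ Metric.closedBall 0 (t ^ b⁻¹) := by
      intro a ha
      simp only [mem_setOf_eq] at ha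
      rw [Metric.mem_closedBall, dist_zero_right]
      rcases eq_or_ne a 0 with rfl | h0
      · simpa using Real.rpow_nonneg ht.le _
      · exact (Real.le_rpow_inv_iff_of_neg (norm_pos_iff.mpr h0) ht hb0).mpr ha
    calc (volume.restrict (Metric.ball (0 : E) R)) {a | t ≤ ‖a‖ ^ b}
        ≤ volume {a : E | t ≤ ‖a‖ ^ b} := Measure.restrict_le_self _
      _ ≤ volume (Metric.closedBall (0 : E) (t ^ b⁻¹)) := measure_mono hsub
      _ = ENNReal.ofReal ((t ^ b⁻¹) ^ n) * volume (Metric.ball (0 : E) 1) := by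
          rw [Measure.addHaar_closedBall _ _ (Real.rpow_nonneg ht.le _),
            finrank_euclideanSpace_fin]
      _ = ENNReal.ofReal (t ^ (b⁻¹ * n)) * volume (Metric.ball (0 : E) 1) := by
          rw [← Real.rpow_natCast (t ^ b⁻¹) n, ← Real.rpow_mul ht.le]
  have hexp : b⁻¹ * (n : ℝ) < -1 := by
    have h1 : b⁻¹ * (n : ℝ) = (n : ℝ) / b := by rw [div_eq_mul_inv, mul_comm]
    rw [h1, div_lt_iff_of_neg hb0]
    linarith
  calc ∫⁻ t in Ioi (0 : ℝ), (volume.restrict (Metric.ball (0 : E) R)) {a | t ≤ ‖a‖ ^ b}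
      ≤ ∫⁻ t in Ioc (0 : ℝ) 1 ∪ Ioi 1, (volume.restrict (Metric.ball (0 : E) R)) {a | t ≤ ‖a‖ ^ b} :=
        lintegral_mono_set Ioi_subset_Ioc_union_Ioi
    _ ≤ (∫⁻ t in Ioc (0 : ℝ) 1, (volume.restrict (Metric.ball (0 : E) R)) {a | t ≤ ‖a‖ ^ b})
        + ∫⁻ t in Ioi (1 : ℝ), (volume.restrict (Metric.ball (0 : E) R)) {a | t ≤ ‖a‖ ^ b} :=
        lintegral_union_le _ _ _
    _ < ⊤ := by
        refine ENNReal.add_lt_top.2 ⟨?_, ?_⟩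
        · calc ∫⁻ t in Ioc (0 : ℝ) 1, (volume.restrict (Metric.ball (0 : E) R)) {a | t ≤ ‖a‖ ^ b}
              ≤ ∫⁻ _ in Ioc (0 : ℝ) 1, volume (Metric.ball (0 : E) R) :=
                lintegral_mono fun t => hbound1 t
            _ = volume (Metric.ball (0 : E) R) * volume (Ioc (0 : ℝ) 1) := by
                rw [setLIntegral_const]
            _ < ⊤ := by
                refine ENNReal.mul_lt_top measure_ball_lt_top ?_
                simp [Real.volume_Ioc]
        · calc ∫⁻ t in Ioi (1 : ℝ), (volume.restrict (Metric.ball (0 : E) R)) {a | t ≤ ‖a‖ ^ b}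
              ≤ ∫⁻ t in Ioi (1 : ℝ),
                  ENNReal.ofReal (t ^ (b⁻¹ * n)) * volume (Metric.ball (0 : E) 1) := by
                refine lintegral_mono_ae ?_
                filter_upwards [ae_restrict_mem measurableSet_Ioi] with t ht
                exact hbound2 t (lt_trans one_pos ht)
            _ = (∫⁻ t in Ioi (1 : ℝ), ENNReal.ofReal (t ^ (b⁻¹ * n)))
                * volume (Metric.ball (0 : E) 1) :=
                lintegral_mul_const' _ _ measure_ball_lt_top.ne
            _ < ⊤ := by
                refine ENNReal.mul_lt_top ?_ measure_ball_lt_top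
                exact (integrableOn_Ioi_rpow_of_lt hexp one_pos).lintegral_lt_top


/-- Finiteness of the integral of a strongly negative power of the norm outside a ball. -/
lemma lint_compl_lt_top {n : ℕ} {s : ℝ} (hs : s < -(n : ℝ)) :
    ∫⁻ z in (Metric.ball (0 : EuclideanSpace ℝ (Fin n)) 2)ᶜ,
      ENNReal.ofReal (‖z‖ ^ s) < ⊤ := by
  set E := EuclideanSpace ℝ (Fin n)
  have hs0 : s < 0 := by
    have : (0:ℝ) ≤ n := Nat.cast_nonneg n
    linarith
  have hpt : ∀ z : E, z ∈ (Metric.ball (0 : E) 2)ᶜ →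
      ENNReal.ofReal (‖z‖ ^ s) ≤ ENNReal.ofReal (2 ^ (-s)) * ENNReal.ofReal ((1 + ‖z‖) ^ s) := by
    intro z hz
    have h2 : (2 : ℝ) ≤ ‖z‖ := by
      simpa [dist_zero_right] using (Metric.mem_ball.not.mp hz)
    have hz0 : (0 : ℝ) < ‖z‖ := by linarith
    have h1 : 1 + ‖z‖ ≤ 2 * ‖z‖ := by linarith
    have h3 : (2 * ‖z‖) ^ s ≤ (1 + ‖z‖) ^ s :=
      Real.rpow_le_rpow_of_nonpos (by linarith) h1 hs0.le
    have h4 : (2 * ‖z‖) ^ s = 2 ^ s * ‖z‖ ^ s := Real.mul_rpow (by norm_num) hz0.le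
    have h5 : ‖z‖ ^ s ≤ 2 ^ (-s) * (1 + ‖z‖) ^ s := by
      have h6 : 2 ^ (-s) * (2 * ‖z‖) ^ s = ‖z‖ ^ s := by
        rw [h4, ← mul_assoc, ← Real.rpow_add (by norm_num : (0:ℝ) < 2)]
        simp
      calc ‖z‖ ^ s = 2 ^ (-s) * (2 * ‖z‖) ^ s := h6.symm
        _ ≤ 2 ^ (-s) * (1 + ‖z‖) ^ s := by
            exact mul_le_mul_of_nonneg_left h3 (Real.rpow_nonneg (by norm_num) _)
    rw [← ENNReal.ofReal_mul (Real.rpow_nonneg (by norm_num) _)]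
    exact ENNReal.ofReal_le_ofReal h5
  calc ∫⁻ z in (Metric.ball (0 : E) 2)ᶜ, ENNReal.ofReal (‖z‖ ^ s)
      ≤ ∫⁻ z in (Metric.ball (0 : E) 2)ᶜ,
          ENNReal.ofReal (2 ^ (-s)) * ENNReal.ofReal ((1 + ‖z‖) ^ s) := by
        refine lintegral_mono_ae ?_
        filter_upwards [ae_restrict_mem measurableSet_ball.compl] with z hz
        exact hpt z hz
    _ ≤ ∫⁻ z : E, ENNReal.ofReal (2 ^ (-s)) * ENNReal.ofReal ((1 + ‖z‖) ^ s) := by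
        exact setLIntegral_le_lintegral _ _
    _ = ENNReal.ofReal (2 ^ (-s)) * ∫⁻ z : E, ENNReal.ofReal ((1 + ‖z‖) ^ s) :=
        lintegral_const_mul' _ _ ENNReal.ofReal_ne_top
    _ < ⊤ := by
        refine ENNReal.mul_lt_top ENNReal.ofReal_lt_top ?_
        have := finite_integral_one_add_norm (E := E) (μ := volume) (r := -s)
          (by rw [finrank_euclideanSpace_fin]; linarith)
        simpa using this


lemma two_inv_rpow_eq (b : ℝ) : ((2:ℝ)⁻¹) ^ b = 2 ^ (-b) := by
  rw [Real.inv_rpow (by norm_num), ← Real.rpow_neg (by norm_num)]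

/-- Uniform bound over unit vectors for the basic convolution-type integral. -/
lemma key_unif {n : ℕ} (hn : 1 ≤ n) {a b : ℝ} (ha : -(n : ℝ) < a) (ha0 : a < 0)
    (hb : -(n : ℝ) < b) (hb0 : b < 0) (hab : a + b < -(n : ℝ)) :
    ∃ M : ℝ≥0∞, M ≠ ⊤ ∧ ∀ u : EuclideanSpace ℝ (Fin n), ‖u‖ = 1 →
      ∫⁻ z, ENNReal.ofReal (‖z - u‖ ^ a) * ENNReal.ofReal (‖z‖ ^ b) ≤ M := by
  set E := EuclideanSpace ℝ (Fin n)
  set I₁ := ∫⁻ w in Metric.ball (0 : E) 2⁻¹, ENNReal.ofReal (‖w‖ ^ a) with hI₁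
  set I₂ := ∫⁻ z in Metric.ball (0 : E) 2, ENNReal.ofReal (‖z‖ ^ b) with hI₂
  set I₃ := ∫⁻ z in (Metric.ball (0 : E) 2)ᶜ, ENNReal.ofReal (‖z‖ ^ (a + b)) with hI₃
  refine ⟨ENNReal.ofReal (2 ^ (-b)) * I₁ + (ENNReal.ofReal (2 ^ (-a)) * I₂
    + ENNReal.ofReal (2 ^ (-a)) * I₃), ?_, ?_⟩
  · refine ENNReal.add_ne_top.2 ⟨?_, ENNReal.add_ne_top.2 ⟨?_, ?_⟩⟩
    · exact (ENNReal.mul_lt_top ENNReal.ofReal_lt_top (lint_ball_lt_top ha ha0 _)).ne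
    · exact (ENNReal.mul_lt_top ENNReal.ofReal_lt_top (lint_ball_lt_top hb hb0 _)).ne
    · exact (ENNReal.mul_lt_top ENNReal.ofReal_lt_top (lint_compl_lt_top hab)).ne
  intro u hu
  set f : E → ℝ≥0∞ := fun z => ENNReal.ofReal (‖z - u‖ ^ a) * ENNReal.ofReal (‖z‖ ^ b) with hf
  set A := Metric.ball u 2⁻¹ with hA
  have hAm : MeasurableSet A := measurableSet_ball
  -- Piece 1 : near u
  have hP1 : ∫⁻ z in A, f z ≤ ENNReal.ofReal (2 ^ (-b)) * I₁ := by
    have step1 : ∫⁻ z in A, f z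
        ≤ ∫⁻ z in A, ENNReal.ofReal (‖z - u‖ ^ a) * ENNReal.ofReal (2 ^ (-b)) := by
      refine lintegral_mono_ae ?_
      filter_upwards [ae_restrict_mem hAm] with z hz
      have h1 : ‖z - u‖ < 2⁻¹ := by rw [hA, Metric.mem_ball, dist_eq_norm] at hz; exact hz
      have h3 : ‖u‖ - ‖z‖ ≤ ‖z - u‖ := by
        have := norm_sub_norm_le u z
        rwa [norm_sub_rev u z] at this
      have h2 : (2 : ℝ)⁻¹ ≤ ‖z‖ := by rw [hu] at h3; linarith
      have h4 : ‖z‖ ^ b ≤ 2 ^ (-b) := by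
        rw [← two_inv_rpow_eq b]
        exact Real.rpow_le_rpow_of_nonpos (by norm_num) h2 hb0.le
      exact mul_le_mul_right (ENNReal.ofReal_le_ofReal h4) _
    have step2 : ∫⁻ z in A, ENNReal.ofReal (‖z - u‖ ^ a) * ENNReal.ofReal (2 ^ (-b))
        = ENNReal.ofReal (2 ^ (-b)) * ∫⁻ z in A, ENNReal.ofReal (‖z - u‖ ^ a) := by
      rw [lintegral_mul_const' _ _ ENNReal.ofReal_ne_top, mul_comm]
    have step3 : ∫⁻ z in A, ENNReal.ofReal (‖z - u‖ ^ a) = I₁ := by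
      rw [hI₁, ← lintegral_indicator hAm, ← lintegral_indicator measurableSet_ball]
      have := lintegral_add_right_eq_self (μ := (volume : Measure E))
        (fun w => (Metric.ball (0 : E) 2⁻¹).indicator (fun w => ENNReal.ofReal (‖w‖ ^ a)) w) (-u)
      rw [← this]
      refine lintegral_congr fun z => ?_
      by_cases h : ‖z - u‖ < 2⁻¹
      · have hz1 : z ∈ A := by rw [hA, Metric.mem_ball, dist_eq_norm]; exact h
        have hz2 : z + -u ∈ Metric.ball (0 : E) 2⁻¹ := by
          rw [Metric.mem_ball, dist_zero_right, ← sub_eq_add_neg]; exact h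
        rw [indicator_of_mem hz1, indicator_of_mem hz2, ← sub_eq_add_neg]
      · have hz1 : z ∉ A := by rw [hA, Metric.mem_ball, dist_eq_norm]; exact h
        have hz2 : z + -u ∉ Metric.ball (0 : E) 2⁻¹ := by
          rw [Metric.mem_ball, dist_zero_right, ← sub_eq_add_neg]; exact h
        rw [indicator_of_notMem hz1, indicator_of_notMem hz2]
    calc ∫⁻ z in A, f z ≤ _ := step1
      _ = _ := step2
      _ = ENNReal.ofReal (2 ^ (-b)) * I₁ := by rw [step3]
  -- Piece 2 : away from u, inside ball 0 2
  have hP2 : ∫⁻ z in Aᶜ ∩ Metric.ball (0 : E) 2, f z ≤ ENNReal.ofReal (2 ^ (-a)) * I₂ := by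
    have step1 : ∫⁻ z in Aᶜ ∩ Metric.ball (0 : E) 2, f z
        ≤ ∫⁻ z in Aᶜ ∩ Metric.ball (0 : E) 2,
            ENNReal.ofReal (2 ^ (-a)) * ENNReal.ofReal (‖z‖ ^ b) := by
      refine lintegral_mono_ae ?_
      filter_upwards [ae_restrict_mem (hAm.compl.inter measurableSet_ball)] with z hz
      have h1 : (2:ℝ)⁻¹ ≤ ‖z - u‖ := by
        have := hz.1
        rw [hA, mem_compl_iff, Metric.mem_ball, dist_eq_norm, not_lt] at this
        exact this
      have h4 : ‖z - u‖ ^ a ≤ 2 ^ (-a) := by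
        rw [← two_inv_rpow_eq a]
        exact Real.rpow_le_rpow_of_nonpos (by norm_num) h1 ha0.le
      exact mul_le_mul_left (ENNReal.ofReal_le_ofReal h4) _
    calc ∫⁻ z in Aᶜ ∩ Metric.ball (0 : E) 2, f z ≤ _ := step1
      _ = ENNReal.ofReal (2 ^ (-a)) * ∫⁻ z in Aᶜ ∩ Metric.ball (0 : E) 2,
            ENNReal.ofReal (‖z‖ ^ b) := lintegral_const_mul' _ _ ENNReal.ofReal_ne_top
      _ ≤ ENNReal.ofReal (2 ^ (-a)) * I₂ := by
          exact mul_le_mul_right (lintegral_mono_set inter_subset_right) _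
  -- Piece 3 : far away
  have hP3 : ∫⁻ z in Aᶜ ∩ (Metric.ball (0 : E) 2)ᶜ, f z ≤ ENNReal.ofReal (2 ^ (-a)) * I₃ := by
    have step1 : ∫⁻ z in Aᶜ ∩ (Metric.ball (0 : E) 2)ᶜ, f z
        ≤ ∫⁻ z in Aᶜ ∩ (Metric.ball (0 : E) 2)ᶜ,
            ENNReal.ofReal (2 ^ (-a)) * ENNReal.ofReal (‖z‖ ^ (a + b)) := by
      refine lintegral_mono_ae ?_
      filter_upwards [ae_restrict_mem (hAm.compl.inter measurableSet_ball.compl)] with z hz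
      have h2 : (2:ℝ) ≤ ‖z‖ := by
        have := hz.2
        rw [mem_compl_iff, Metric.mem_ball, dist_zero_right, not_lt] at this
        exact this
      have hz0 : (0:ℝ) < ‖z‖ := by linarith
      have h3 : ‖z‖ / 2 ≤ ‖z - u‖ := by
        have h4 : ‖z‖ - ‖u‖ ≤ ‖z - u‖ := norm_sub_norm_le z u
        rw [hu] at h4; linarith
      have h5 : ‖z - u‖ ^ a ≤ (‖z‖ / 2) ^ a :=
        Real.rpow_le_rpow_of_nonpos (by linarith) h3 ha0.le
      have h6 : (‖z‖ / 2) ^ a = 2 ^ (-a) * ‖z‖ ^ a := by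
        rw [Real.div_rpow (norm_nonneg z) (by norm_num), div_eq_mul_inv,
          ← Real.rpow_neg (by norm_num), mul_comm]
      have h7 : f z ≤ ENNReal.ofReal (2 ^ (-a) * ‖z‖ ^ a) * ENNReal.ofReal (‖z‖ ^ b) := by
        refine mul_le_mul_left (ENNReal.ofReal_le_ofReal ?_) _
        rw [← h6]; exact h5
      refine h7.trans (le_of_eq ?_)
      rw [← ENNReal.ofReal_mul (by positivity), ← ENNReal.ofReal_mul (by positivity),
        mul_assoc, ← Real.rpow_add hz0]
    calc ∫⁻ z in Aᶜ ∩ (Metric.ball (0 : E) 2)ᶜ, f z ≤ _ := step1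
      _ = ENNReal.ofReal (2 ^ (-a)) * ∫⁻ z in Aᶜ ∩ (Metric.ball (0 : E) 2)ᶜ,
            ENNReal.ofReal (‖z‖ ^ (a + b)) := lintegral_const_mul' _ _ ENNReal.ofReal_ne_top
      _ ≤ ENNReal.ofReal (2 ^ (-a)) * I₃ := by
          exact mul_le_mul_right (lintegral_mono_set inter_subset_right) _
  -- Combine
  have hcompl : ∫⁻ z in Aᶜ, f z ≤ (∫⁻ z in Aᶜ ∩ Metric.ball (0 : E) 2, f z)
      + ∫⁻ z in Aᶜ ∩ (Metric.ball (0 : E) 2)ᶜ, f z := by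
    have h : Aᶜ = (Aᶜ ∩ Metric.ball (0 : E) 2) ∪ (Aᶜ ∩ (Metric.ball (0 : E) 2)ᶜ) := by
      rw [← inter_union_distrib_left, union_compl_self, inter_univ]
    calc ∫⁻ z in Aᶜ, f z
        = ∫⁻ z in (Aᶜ ∩ Metric.ball (0 : E) 2) ∪ (Aᶜ ∩ (Metric.ball (0 : E) 2)ᶜ), f z := by
          rw [← h]
      _ ≤ _ := lintegral_union_le _ _ _
  calc ∫⁻ z, f z = (∫⁻ z in A, f z) + ∫⁻ z in Aᶜ, f z := (lintegral_add_compl f hAm).symm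
    _ ≤ ENNReal.ofReal (2 ^ (-b)) * I₁ + (ENNReal.ofReal (2 ^ (-a)) * I₂
        + ENNReal.ofReal (2 ^ (-a)) * I₃) :=
        add_le_add hP1 (hcompl.trans (add_le_add hP2 hP3))

/-- First Schur condition: integral in the second variable. -/
lemma schur_condA {n : ℕ} (hn : 1 ≤ n) {α c s : ℝ} (hc : 0 ≤ c) (hα0 : 0 < α)
    (hαn : α < (n : ℝ)) (hs : -(n : ℝ) < s) (hs0 : s < 0) (hsum : α - n + s < -(n : ℝ)) :
    ∃ A : ℝ≥0∞, A ≠ ⊤ ∧ ∀ x : EuclideanSpace ℝ (Fin n), x ≠ 0 →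
      ∫⁻ y, (ENNReal.ofReal (‖x‖ ^ (-α)) * ENNReal.ofReal (c * ‖x - y‖ ^ (α - (n : ℝ))))
          * ENNReal.ofReal (‖y‖ ^ s) ≤ A * ENNReal.ofReal (‖x‖ ^ s) := by
  obtain ⟨M, hM, hMu⟩ := key_unif hn (a := α - n) (b := s)
    (by linarith) (by linarith) hs hs0 hsum
  refine ⟨ENNReal.ofReal c * M, ENNReal.mul_ne_top ENNReal.ofReal_ne_top hM, ?_⟩
  intro x hx
  set r := ‖x‖ with hrdef
  have hr : 0 < r := norm_pos_iff.mpr hx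
  set u : EuclideanSpace ℝ (Fin n) := r⁻¹ • x with hudef
  have hu : ‖u‖ = 1 := by
    rw [hudef, norm_smul, norm_inv, norm_norm, ← hrdef, inv_mul_cancel₀ hr.ne']
  have hru : r • u = x := by rw [hudef, smul_smul, mul_inv_cancel₀ hr.ne', one_smul]
  set G : EuclideanSpace ℝ (Fin n) → ℝ≥0∞ := fun y =>
    (ENNReal.ofReal (‖x‖ ^ (-α)) * ENNReal.ofReal (c * ‖x - y‖ ^ (α - (n : ℝ))))
      * ENNReal.ofReal (‖y‖ ^ s) with hGdef
  have hG : Measurable G := by fun_prop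
  have hGz : ∀ z : EuclideanSpace ℝ (Fin n),
      G (r • z) = (ENNReal.ofReal c * ENNReal.ofReal (r ^ (s - n)))
      * (ENNReal.ofReal (‖z - u‖ ^ (α - (n : ℝ))) * ENNReal.ofReal (‖z‖ ^ s)) := by
    intro z
    have hxz : x - r • z = r • (u - z) := by rw [smul_sub, hru]
    have hnorm : ‖x - r • z‖ = r * ‖z - u‖ := by
      rw [hxz, norm_smul, Real.norm_eq_abs, abs_of_pos hr, norm_sub_rev]
    have hnz : ‖r • z‖ = r * ‖z‖ := by
      rw [norm_smul, Real.norm_eq_abs, abs_of_pos hr]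
    have split : (ENNReal.ofReal c * ENNReal.ofReal (r ^ (s - (n:ℝ))))
        * (ENNReal.ofReal (‖z - u‖ ^ (α - (n : ℝ))) * ENNReal.ofReal (‖z‖ ^ s))
        = ENNReal.ofReal ((c * r ^ (s - (n:ℝ)))
            * (‖z - u‖ ^ (α - (n : ℝ)) * ‖z‖ ^ s)) := by
      rw [← ENNReal.ofReal_mul hc,
        ← ENNReal.ofReal_mul (Real.rpow_nonneg (norm_nonneg _) _),
        ← ENNReal.ofReal_mul (mul_nonneg hc (Real.rpow_nonneg hr.le _))]
    rw [hGdef]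
    simp only [hnorm, hnz]
    rw [split, ← ENNReal.ofReal_mul (by positivity), ← ENNReal.ofReal_mul (by positivity)]
    congr 1
    have hrcomb : r ^ (s - (n:ℝ)) = r ^ (-α) * r ^ (α - (n:ℝ)) * r ^ s := by
      rw [← Real.rpow_add hr, ← Real.rpow_add hr]; congr 1; ring
    rw [Real.mul_rpow hr.le (norm_nonneg _), Real.mul_rpow hr.le (norm_nonneg _), hrcomb]
    ring
  calc ∫⁻ y, G y = ENNReal.ofReal (r ^ n) * ∫⁻ z, G (r • z) :=
        lintegral_scale_euclidean G hG hr
    _ = ENNReal.ofReal (r ^ n) * ∫⁻ z, (ENNReal.ofReal c * ENNReal.ofReal (r ^ (s - n)))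
        * (ENNReal.ofReal (‖z - u‖ ^ (α - (n : ℝ))) * ENNReal.ofReal (‖z‖ ^ s)) := by
        congr 1; exact lintegral_congr hGz
    _ = ENNReal.ofReal (r ^ n) * ((ENNReal.ofReal c * ENNReal.ofReal (r ^ (s - n)))
        * ∫⁻ z, ENNReal.ofReal (‖z - u‖ ^ (α - (n : ℝ))) * ENNReal.ofReal (‖z‖ ^ s)) := by
        rw [lintegral_const_mul' _ _
          (ENNReal.mul_ne_top ENNReal.ofReal_ne_top ENNReal.ofReal_ne_top)]
    _ ≤ ENNReal.ofReal (r ^ n) * ((ENNReal.ofReal c * ENNReal.ofReal (r ^ (s - n))) * M) :=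
        mul_le_mul_right (mul_le_mul_right (hMu u hu) _) _
    _ = ENNReal.ofReal c * M * ENNReal.ofReal (‖x‖ ^ s) := by
        rw [← hrdef]
        have h3 : ENNReal.ofReal (r ^ n) * ((ENNReal.ofReal c * ENNReal.ofReal (r ^ (s - n))) * M)
            = ENNReal.ofReal c * M * (ENNReal.ofReal (r ^ n) * ENNReal.ofReal (r ^ (s - n))) := by
          ring
        rw [h3, ← ENNReal.ofReal_mul (by positivity)]
        congr 2
        rw [← Real.rpow_natCast r n, ← Real.rpow_add hr]
        congr 1
        ring

/-- Second Schur condition: integral in the first variable. -/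
lemma schur_condB {n : ℕ} (hn : 1 ≤ n) {α c s : ℝ} (hc : 0 ≤ c) (hα0 : 0 < α)
    (hαn : α < (n : ℝ)) (hsa : -(n : ℝ) < s - α) (hsa0 : s - α < 0) (hs : s < 0) :
    ∃ B : ℝ≥0∞, B ≠ ⊤ ∧ ∀ y : EuclideanSpace ℝ (Fin n), y ≠ 0 →
      ∫⁻ x, (ENNReal.ofReal (‖x‖ ^ (-α)) * ENNReal.ofReal (c * ‖x - y‖ ^ (α - (n : ℝ))))
          * ENNReal.ofReal (‖x‖ ^ s) ≤ B * ENNReal.ofReal (‖y‖ ^ s) := by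
  obtain ⟨M, hM, hMu⟩ := key_unif hn (a := α - n) (b := s - α)
    (by linarith) (by linarith) hsa hsa0 (by linarith)
  refine ⟨ENNReal.ofReal c * M, ENNReal.mul_ne_top ENNReal.ofReal_ne_top hM, ?_⟩
  intro y hy
  set r := ‖y‖ with hrdef
  have hr : 0 < r := norm_pos_iff.mpr hy
  set u : EuclideanSpace ℝ (Fin n) := r⁻¹ • y with hudef
  have hu : ‖u‖ = 1 := by
    rw [hudef, norm_smul, norm_inv, norm_norm, ← hrdef, inv_mul_cancel₀ hr.ne']
  have hru : r • u = y := by rw [hudef, smul_smul, mul_inv_cancel₀ hr.ne', one_smul]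
  set G : EuclideanSpace ℝ (Fin n) → ℝ≥0∞ := fun x =>
    (ENNReal.ofReal (‖x‖ ^ (-α)) * ENNReal.ofReal (c * ‖x - y‖ ^ (α - (n : ℝ))))
      * ENNReal.ofReal (‖x‖ ^ s) with hGdef
  have hG : Measurable G := by fun_prop
  have hGz : ∀ z : EuclideanSpace ℝ (Fin n),
      G (r • z) = (ENNReal.ofReal c * ENNReal.ofReal (r ^ (s - n)))
      * (ENNReal.ofReal (‖z - u‖ ^ (α - (n : ℝ))) * ENNReal.ofReal (‖z‖ ^ (s - α))) := by
    intro z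
    have hxz : r • z - y = r • (z - u) := by rw [smul_sub, hru]
    have hnorm : ‖r • z - y‖ = r * ‖z - u‖ := by
      rw [hxz, norm_smul, Real.norm_eq_abs, abs_of_pos hr]
    have hnz : ‖r • z‖ = r * ‖z‖ := by
      rw [norm_smul, Real.norm_eq_abs, abs_of_pos hr]
    have hzz : ‖z‖ ^ (-α) * ‖z‖ ^ s = ‖z‖ ^ (s - α) := by
      rcases eq_or_ne ‖z‖ 0 with hz | hz
      · rw [hz, Real.zero_rpow (by linarith : -α ≠ 0),
          Real.zero_rpow (by linarith : s - α ≠ 0), zero_mul]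
      · have hz0 : 0 < ‖z‖ := (norm_nonneg z).lt_of_ne (Ne.symm hz)
        rw [← Real.rpow_add hz0]
        congr 1
        ring
    have split : (ENNReal.ofReal c * ENNReal.ofReal (r ^ (s - (n:ℝ))))
        * (ENNReal.ofReal (‖z - u‖ ^ (α - (n : ℝ))) * ENNReal.ofReal (‖z‖ ^ (s - α)))
        = ENNReal.ofReal ((c * r ^ (s - (n:ℝ)))
            * (‖z - u‖ ^ (α - (n : ℝ)) * ‖z‖ ^ (s - α))) := by
      rw [← ENNReal.ofReal_mul hc,
        ← ENNReal.ofReal_mul (Real.rpow_nonneg (norm_nonneg _) _),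
        ← ENNReal.ofReal_mul (mul_nonneg hc (Real.rpow_nonneg hr.le _))]
    rw [hGdef]
    simp only [hnorm, hnz]
    rw [split, ← ENNReal.ofReal_mul (by positivity), ← ENNReal.ofReal_mul (by positivity)]
    congr 1
    have hrcomb : r ^ (s - (n:ℝ)) = r ^ (-α) * r ^ (α - (n:ℝ)) * r ^ s := by
      rw [← Real.rpow_add hr, ← Real.rpow_add hr]; congr 1; ring
    rw [Real.mul_rpow hr.le (norm_nonneg _), Real.mul_rpow hr.le (norm_nonneg _),
      Real.mul_rpow hr.le (norm_nonneg _), hrcomb, ← hzz]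
    ring
  calc ∫⁻ x, G x = ENNReal.ofReal (r ^ n) * ∫⁻ z, G (r • z) :=
        lintegral_scale_euclidean G hG hr
    _ = ENNReal.ofReal (r ^ n) * ∫⁻ z, (ENNReal.ofReal c * ENNReal.ofReal (r ^ (s - n)))
        * (ENNReal.ofReal (‖z - u‖ ^ (α - (n : ℝ))) * ENNReal.ofReal (‖z‖ ^ (s - α))) := by
        congr 1; exact lintegral_congr hGz
    _ = ENNReal.ofReal (r ^ n) * ((ENNReal.ofReal c * ENNReal.ofReal (r ^ (s - n)))
        * ∫⁻ z, ENNReal.ofReal (‖z - u‖ ^ (α - (n : ℝ))) * ENNReal.ofReal (‖z‖ ^ (s - α))) := by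
        rw [lintegral_const_mul' _ _
          (ENNReal.mul_ne_top ENNReal.ofReal_ne_top ENNReal.ofReal_ne_top)]
    _ ≤ ENNReal.ofReal (r ^ n) * ((ENNReal.ofReal c * ENNReal.ofReal (r ^ (s - n))) * M) :=
        mul_le_mul_right (mul_le_mul_right (hMu u hu) _) _
    _ = ENNReal.ofReal c * M * ENNReal.ofReal (‖y‖ ^ s) := by
        rw [← hrdef]
        have h3 : ENNReal.ofReal (r ^ n) * ((ENNReal.ofReal c * ENNReal.ofReal (r ^ (s - n))) * M)
            = ENNReal.ofReal c * M * (ENNReal.ofReal (r ^ n) * ENNReal.ofReal (r ^ (s - n))) := by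
          ring
        rw [h3, ← ENNReal.ofReal_mul (by positivity)]
        congr 2
        rw [← Real.rpow_natCast r n, ← Real.rpow_add hr]
        congr 1
        ring

/-- Schur test with power weights on Euclidean space. -/
lemma schur_bound {n : ℕ} (hn : 1 ≤ n) {p q β : ℝ} (hpq : Real.HolderConjugate p q)
    (hβ : 0 < β) (K : EuclideanSpace ℝ (Fin n) → EuclideanSpace ℝ (Fin n) → ℝ≥0∞)
    (hK : Measurable (Function.uncurry K)) (hKfin : ∀ x y, K x y ≠ ⊤)
    {A B : ℝ≥0∞} (hAt : A ≠ ⊤) (hBt : B ≠ ⊤)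
    (hA : ∀ x : EuclideanSpace ℝ (Fin n), x ≠ 0 →
      ∫⁻ y, K x y * ENNReal.ofReal (‖y‖ ^ (-(β * q))) ≤ A * ENNReal.ofReal (‖x‖ ^ (-(β * q))))
    (hB : ∀ y : EuclideanSpace ℝ (Fin n), y ≠ 0 →
      ∫⁻ x, K x y * ENNReal.ofReal (‖x‖ ^ (-(β * p))) ≤ B * ENNReal.ofReal (‖y‖ ^ (-(β * p))))
    (g : EuclideanSpace ℝ (Fin n) → ℝ≥0∞) (hg : Measurable g) (hgfin : ∀ y, g y ≠ ⊤) :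
    ∫⁻ x, (∫⁻ y, K x y * g y) ^ p ≤ A ^ (p / q) * B * ∫⁻ y, g y ^ p := by
  have hp1 : 1 < p := hpq.lt
  have hp0 : 0 < p := lt_trans one_pos hp1
  have hq0 : 0 < q := hpq.symm.pos
  have hq1 : 1 < q := hpq.symm.lt
  have hsum : 1 / p + 1 / q = 1 := by
    have := hpq.inv_add_inv_eq_one
    simpa [one_div] using this
  set h : EuclideanSpace ℝ (Fin n) → ℝ≥0∞ := fun v => ENNReal.ofReal (‖v‖ ^ (-β)) with hhdef
  have hh : Measurable h := by fun_prop
  have hfin : ∀ v, h v ≠ ⊤ := fun v => ENNReal.ofReal_ne_top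
  have hpos : ∀ v : EuclideanSpace ℝ (Fin n), v ≠ 0 → h v ≠ 0 := by
    intro v hv
    rw [hhdef]
    simp only [ne_eq, ENNReal.ofReal_eq_zero, not_le]
    exact Real.rpow_pos_of_pos (norm_pos_iff.mpr hv) _
  have hhq : ∀ v : EuclideanSpace ℝ (Fin n),
      h v ^ q = ENNReal.ofReal (‖v‖ ^ (-(β * q))) := by
    intro v
    rw [hhdef]
    rw [ENNReal.ofReal_rpow_of_nonneg (Real.rpow_nonneg (norm_nonneg _) _) hq0.le,
      ← Real.rpow_mul (norm_nonneg _), neg_mul]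
  have hhp : ∀ v : EuclideanSpace ℝ (Fin n),
      h v ^ p = ENNReal.ofReal (‖v‖ ^ (-(β * p))) := by
    intro v
    rw [hhdef]
    rw [ENNReal.ofReal_rpow_of_nonneg (Real.rpow_nonneg (norm_nonneg _) _) hp0.le,
      ← Real.rpow_mul (norm_nonneg _), neg_mul]
  -- the singleton {0} is null
  haveI : Nonempty (Fin n) := ⟨⟨0, hn⟩⟩
  have hae : ∀ᵐ x : EuclideanSpace ℝ (Fin n) ∂volume, x ≠ 0 := by
    have h0 : {x : EuclideanSpace ℝ (Fin n) | ¬ x ≠ 0} = {0} := by ext x; simp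
    rw [ae_iff, h0]
    exact measure_singleton 0
  set W : EuclideanSpace ℝ (Fin n) → ℝ≥0∞ :=
    fun x => ∫⁻ y, K x y * (g y ^ p * (h y)⁻¹ ^ p) with hWdef
  -- Step 1 : Hölder
  have step1 : ∀ x : EuclideanSpace ℝ (Fin n), x ≠ 0 →
      (∫⁻ y, K x y * g y) ≤ A ^ (1 / q) * h x * W x ^ (1 / p) := by
    intro x hx
    have hKx : Measurable (K x) := hK.of_uncurry_left
    set F1 : EuclideanSpace ℝ (Fin n) → ℝ≥0∞ := fun y => K x y ^ (1 / q) * h y with hF1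
    set F2 : EuclideanSpace ℝ (Fin n) → ℝ≥0∞ :=
      fun y => K x y ^ (1 / p) * (g y * (h y)⁻¹) with hF2
    have hmul : ∀ᵐ y : EuclideanSpace ℝ (Fin n) ∂volume, K x y * g y = F1 y * F2 y := by
      filter_upwards [hae] with y hy
      have hKK : K x y ^ (1 / q) * K x y ^ (1 / p) = K x y := by
        rcases eq_or_ne (K x y) 0 with hk | hk
        · rw [hk, ENNReal.zero_rpow_of_pos (by positivity), zero_mul]
        · rw [← ENNReal.rpow_add _ _ hk (hKfin x y)]
          rw [show 1 / q + 1 / p = 1 by linarith [hsum], ENNReal.rpow_one]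
      have h1 : F1 y * F2 y = (K x y ^ (1 / q) * K x y ^ (1 / p)) * (g y * (h y * (h y)⁻¹)) := by
        rw [hF1, hF2]; ring
      rw [h1, hKK, ENNReal.mul_inv_cancel (hpos y hy) (hfin y), mul_one]
    have hold := ENNReal.lintegral_mul_le_Lp_mul_Lq (volume : Measure (EuclideanSpace ℝ (Fin n)))
      hpq.symm ((hKx.pow_const (1 / q)).mul hh).aemeasurable
      ((hKx.pow_const (1 / p)).mul (hg.mul hh.inv)).aemeasurable
    have hF1q : ∀ y, F1 y ^ q = K x y * h y ^ q := by
      intro y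
      rw [hF1, ENNReal.mul_rpow_of_nonneg _ _ hq0.le, ← ENNReal.rpow_mul,
        one_div, inv_mul_cancel₀ hq0.ne', ENNReal.rpow_one]
    have hF2p : ∀ y, F2 y ^ p = K x y * (g y ^ p * (h y)⁻¹ ^ p) := by
      intro y
      rw [hF2, ENNReal.mul_rpow_of_nonneg _ _ hp0.le, ← ENNReal.rpow_mul,
        one_div, inv_mul_cancel₀ hp0.ne', ENNReal.rpow_one,
        ENNReal.mul_rpow_of_nonneg _ _ hp0.le]
    have hI1 : (∫⁻ y, F1 y ^ q) ^ (1 / q) ≤ A ^ (1 / q) * h x := by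
      have e1 : ∫⁻ y, F1 y ^ q = ∫⁻ y, K x y * ENNReal.ofReal (‖y‖ ^ (-(β * q))) := by
        refine lintegral_congr fun y => ?_
        rw [hF1q y, hhq y]
      have e2 : (∫⁻ y, F1 y ^ q) ≤ A * h x ^ q := by
        rw [e1, hhq x]; exact hA x hx
      calc (∫⁻ y, F1 y ^ q) ^ (1 / q) ≤ (A * h x ^ q) ^ (1 / q) :=
            ENNReal.rpow_le_rpow e2 (by positivity)
        _ = A ^ (1 / q) * h x := by
            rw [ENNReal.mul_rpow_of_nonneg _ _ (by positivity), ← ENNReal.rpow_mul,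
              one_div, mul_inv_cancel₀ hq0.ne', ENNReal.rpow_one]
    calc ∫⁻ y, K x y * g y = ∫⁻ y, F1 y * F2 y := lintegral_congr_ae hmul
      _ ≤ (∫⁻ y, F1 y ^ q) ^ (1 / q) * (∫⁻ y, F2 y ^ p) ^ (1 / p) := hold
      _ ≤ (A ^ (1 / q) * h x) * (∫⁻ y, F2 y ^ p) ^ (1 / p) := by
          exact mul_le_mul_left hI1 _
      _ = A ^ (1 / q) * h x * W x ^ (1 / p) := by
          rw [hWdef]
          congr 2
          exact lintegral_congr fun y => hF2p y
  -- Step 2 : main estimate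
  have hWmeas : Measurable (fun zz : EuclideanSpace ℝ (Fin n) × EuclideanSpace ℝ (Fin n) =>
      (h zz.1) ^ p * (K zz.1 zz.2 * (g zz.2 ^ p * (h zz.2)⁻¹ ^ p))) := by
    exact ((hh.comp measurable_fst).pow_const p).mul
      (hK.mul (((hg.comp measurable_snd).pow_const p).mul
        (((hh.comp measurable_snd).inv).pow_const p)))
  calc ∫⁻ x, (∫⁻ y, K x y * g y) ^ p
      ≤ ∫⁻ x, (A ^ (1 / q) * h x * W x ^ (1 / p)) ^ p := by
        refine lintegral_mono_ae ?_
        filter_upwards [hae] with x hx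
        exact ENNReal.rpow_le_rpow (step1 x hx) hp0.le
    _ = ∫⁻ x, A ^ (p / q) * (h x ^ p * W x) := by
        refine lintegral_congr fun x => ?_
        rw [ENNReal.mul_rpow_of_nonneg _ _ hp0.le, ENNReal.mul_rpow_of_nonneg _ _ hp0.le,
          ← ENNReal.rpow_mul, ← ENNReal.rpow_mul,
          show (1 / q) * p = p / q by ring, one_div_mul_cancel hp0.ne', ENNReal.rpow_one]
        ring
    _ = A ^ (p / q) * ∫⁻ x, h x ^ p * W x :=
        lintegral_const_mul' _ _ (ENNReal.rpow_ne_top_of_nonneg (by positivity) hAt)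
    _ = A ^ (p / q) * ∫⁻ x, ∫⁻ y, h x ^ p * (K x y * (g y ^ p * (h y)⁻¹ ^ p)) := by
        congr 1
        refine lintegral_congr fun x => ?_
        rw [hWdef]
        exact (lintegral_const_mul' _ _
          (ENNReal.rpow_ne_top_of_nonneg hp0.le (hfin x))).symm
    _ = A ^ (p / q) * ∫⁻ y, ∫⁻ x, h x ^ p * (K x y * (g y ^ p * (h y)⁻¹ ^ p)) := by
        congr 1
        exact lintegral_lintegral_swap hWmeas.aemeasurable
    _ ≤ A ^ (p / q) * ∫⁻ y, B * g y ^ p := by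
        refine mul_le_mul_right (lintegral_mono_ae ?_) _
        filter_upwards [hae] with y hy
        have hCy : g y ^ p * (h y)⁻¹ ^ p ≠ ⊤ := by
          refine ENNReal.mul_ne_top (ENNReal.rpow_ne_top_of_nonneg hp0.le (hgfin y)) ?_
          exact ENNReal.rpow_ne_top_of_nonneg hp0.le (ENNReal.inv_ne_top.2 (hpos y hy))
        have e3 : ∫⁻ x, h x ^ p * (K x y * (g y ^ p * (h y)⁻¹ ^ p))
            = (g y ^ p * (h y)⁻¹ ^ p) * ∫⁻ x, K x y * h x ^ p := by
          rw [← lintegral_const_mul' _ _ hCy]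
          exact lintegral_congr fun x => by ring
        have e4 : ∫⁻ x, K x y * h x ^ p ≤ B * h y ^ p := by
          have e5 : ∫⁻ x, K x y * h x ^ p
              = ∫⁻ x, K x y * ENNReal.ofReal (‖x‖ ^ (-(β * p))) := by
            exact lintegral_congr fun x => by rw [hhp x]
          rw [e5, hhp y]
          exact hB y hy
        calc ∫⁻ x, h x ^ p * (K x y * (g y ^ p * (h y)⁻¹ ^ p))
            = (g y ^ p * (h y)⁻¹ ^ p) * ∫⁻ x, K x y * h x ^ p := e3
          _ ≤ (g y ^ p * (h y)⁻¹ ^ p) * (B * h y ^ p) := mul_le_mul_right e4 _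
          _ = B * g y ^ p * ((h y)⁻¹ ^ p * h y ^ p) := by ring
          _ = B * g y ^ p := by
              rw [← ENNReal.mul_rpow_of_nonneg _ _ hp0.le,
                ENNReal.inv_mul_cancel (hpos y hy) (hfin y), ENNReal.one_rpow, mul_one]
    _ = A ^ (p / q) * (B * ∫⁻ y, g y ^ p) := by
        rw [lintegral_const_mul' _ _ hBt]
    _ = A ^ (p / q) * B * ∫⁻ y, g y ^ p := by rw [mul_assoc]

theorem hardy_operator_bounded (n : ℕ) (hn : 1 ≤ n) (p α : ℝ) (hp : 1 < p)
    (hα0 : 0 < α) (hα : α < (n : ℝ) / p) :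
    ∃ C : ℝ, 0 < C ∧ ∀ f : EuclideanSpace ℝ (Fin n) → ℝ,
      ContDiff ℝ (⊤ : ℕ∞) f → HasCompactSupport f →
        eLpNorm
            (fun x => ‖x‖ ^ (-α) *
              ∫ y, f y *
                (Real.Gamma (((n : ℝ) - α) / 2) /
                    (2 ^ α * Real.pi ^ ((n : ℝ) / 2) * Real.Gamma (α / 2)) *
                  ‖x - y‖ ^ (α - (n : ℝ))))
            (ENNReal.ofReal p) volume
          ≤ ENNReal.ofReal C * eLpNorm f (ENNReal.ofReal p) volume := by
  have hp0 : 0 < p := lt_trans one_pos hp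
  have hn0 : (0 : ℝ) < n := by exact_mod_cast hn
  have hnp : 0 < (n : ℝ) / p := div_pos hn0 hp0
  have hαn : α < (n : ℝ) := hα.trans (div_lt_self hn0 hp)
  have hpq : p.HolderConjugate (p / (p - 1)) := Real.HolderConjugate.conjExponent hp
  set q := p / (p - 1) with hqdef
  have hq0 : 0 < q := hpq.symm.pos
  have hq1 : 1 < q := hpq.symm.lt
  have hsum : 1 / p + 1 / q = 1 := by
    have := hpq.inv_add_inv_eq_one
    simpa [one_div] using this
  have hqval : (n : ℝ) / q = n - n / p := by
    have h1 : p - 1 ≠ 0 := by linarith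
    rw [hqdef]
    field_simp
  set β := (n : ℝ) / (p * q) with hβdef
  have hβ0 : 0 < β := div_pos hn0 (mul_pos hp0 hq0)
  have hβq : β * q = (n : ℝ) / p := by rw [hβdef]; field_simp
  have hβp : β * p = (n : ℝ) / q := by rw [hβdef]; field_simp
  set c := Real.Gamma (((n : ℝ) - α) / 2) /
    (2 ^ α * Real.pi ^ ((n : ℝ) / 2) * Real.Gamma (α / 2)) with hcdef
  have hc : 0 < c := by
    refine div_pos (Real.Gamma_pos_of_pos (by linarith)) ?_
    exact mul_pos (mul_pos (Real.rpow_pos_of_pos two_pos α)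
      (Real.rpow_pos_of_pos Real.pi_pos _)) (Real.Gamma_pos_of_pos (by linarith))
  -- Schur conditions
  obtain ⟨A, hAt, hA⟩ := schur_condA (n := n) hn (α := α) (c := c) (s := -((n : ℝ) / p))
    hc.le hα0 hαn (by have := div_lt_self hn0 hp; linarith) (by linarith) (by linarith)
  obtain ⟨B, hBt, hB⟩ := schur_condB (n := n) hn (α := α) (c := c) (s := -((n : ℝ) / q))
    hc.le hα0 hαn (by have := hqval; linarith) (by have := div_pos hn0 hq0; linarith)
    (by have := div_pos hn0 hq0; linarith)
  set K : EuclideanSpace ℝ (Fin n) → EuclideanSpace ℝ (Fin n) → ℝ≥0∞ := fun x y =>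
    ENNReal.ofReal (‖x‖ ^ (-α)) * ENNReal.ofReal (c * ‖x - y‖ ^ (α - (n : ℝ))) with hKdef
  have hK : Measurable (Function.uncurry K) := by
    rw [hKdef, Function.uncurry_def]
    fun_prop
  have hKfin : ∀ x y, K x y ≠ ⊤ := fun x y =>
    ENNReal.mul_ne_top ENNReal.ofReal_ne_top ENNReal.ofReal_ne_top
  have hA' : ∀ x : EuclideanSpace ℝ (Fin n), x ≠ 0 →
      ∫⁻ y, K x y * ENNReal.ofReal (‖y‖ ^ (-(β * q))) ≤ A * ENNReal.ofReal (‖x‖ ^ (-(β * q))) := by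
    intro x hx
    rw [hβq]
    exact hA x hx
  have hB' : ∀ y : EuclideanSpace ℝ (Fin n), y ≠ 0 →
      ∫⁻ x, K x y * ENNReal.ofReal (‖x‖ ^ (-(β * p))) ≤ B * ENNReal.ofReal (‖y‖ ^ (-(β * p))) := by
    intro y hy
    rw [hβp]
    have := hB y hy
    simpa [hKdef, sub_eq_add_neg, add_comm, neg_add] using this
  -- the constant
  have hDt : A ^ (p / q) * B ≠ ⊤ :=
    ENNReal.mul_ne_top (ENNReal.rpow_ne_top_of_nonneg (by positivity) hAt) hBt
  have hD1t : (A ^ (p / q) * B) ^ (1 / p) ≠ ⊤ :=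
    ENNReal.rpow_ne_top_of_nonneg (by positivity) hDt
  refine ⟨((A ^ (p / q) * B) ^ (1 / p)).toReal + 1, by positivity, ?_⟩
  intro f hf1 hf2
  set g : EuclideanSpace ℝ (Fin n) → ℝ≥0∞ := fun y => (‖f y‖₊ : ℝ≥0∞) with hgdef
  have hg : Measurable g :=
    measurable_coe_nnreal_ennreal.comp hf1.continuous.measurable.nnnorm
  have hgfin : ∀ y, g y ≠ ⊤ := fun y => ENNReal.coe_ne_top
  have hmain := schur_bound hn hpq hβ0 K hK hKfin hAt hBt hA' hB' g hg hgfin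
  -- pointwise estimate
  have hpt : ∀ x : EuclideanSpace ℝ (Fin n),
      (‖(‖x‖ ^ (-α) * ∫ y, f y * (c * ‖x - y‖ ^ (α - (n : ℝ))))‖₊ : ℝ≥0∞)
        ≤ ∫⁻ y, K x y * g y := by
    intro x
    calc (‖(‖x‖ ^ (-α) * ∫ y, f y * (c * ‖x - y‖ ^ (α - (n : ℝ))))‖₊ : ℝ≥0∞)
        = ENNReal.ofReal (‖x‖ ^ (-α))
          * (‖∫ y, f y * (c * ‖x - y‖ ^ (α - (n : ℝ)))‖₊ : ℝ≥0∞) := by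
          rw [nnnorm_mul, ENNReal.coe_mul,
            ← enorm_eq_nnnorm (‖x‖ ^ (-α)), Real.enorm_eq_ofReal (Real.rpow_nonneg (norm_nonneg x) _)]
      _ ≤ ENNReal.ofReal (‖x‖ ^ (-α))
          * ∫⁻ y, (‖f y * (c * ‖x - y‖ ^ (α - (n : ℝ)))‖₊ : ℝ≥0∞) :=
          mul_le_mul_right (enorm_integral_le_lintegral_enorm _) _
      _ = ∫⁻ y, K x y * g y := by
          rw [← lintegral_const_mul' _ _ ENNReal.ofReal_ne_top]
          refine lintegral_congr fun y => ?_
          rw [nnnorm_mul, ENNReal.coe_mul,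
            ← enorm_eq_nnnorm (c * ‖x - y‖ ^ (α - (n : ℝ))), Real.enorm_eq_ofReal
              (mul_nonneg hc.le (Real.rpow_nonneg (norm_nonneg _) _)), hKdef, hgdef]
          ring
  -- conclude
  have hP0 : (ENNReal.ofReal p) ≠ 0 := (ENNReal.ofReal_pos.mpr hp0).ne'
  have hPtop : (ENNReal.ofReal p) ≠ ⊤ := ENNReal.ofReal_ne_top
  rw [eLpNorm_eq_lintegral_rpow_enorm_toReal hP0 hPtop, eLpNorm_eq_lintegral_rpow_enorm_toReal hP0 hPtop,
    ENNReal.toReal_ofReal hp0.le]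
  have hCb : (A ^ (p / q) * B) ^ (1 / p)
      ≤ ENNReal.ofReal (((A ^ (p / q) * B) ^ (1 / p)).toReal + 1) := by
    calc (A ^ (p / q) * B) ^ (1 / p)
        = ENNReal.ofReal (((A ^ (p / q) * B) ^ (1 / p)).toReal) :=
          (ENNReal.ofReal_toReal hD1t).symm
      _ ≤ _ := ENNReal.ofReal_le_ofReal ((le_add_iff_nonneg_right _).mpr zero_le_one)
  calc (∫⁻ x, (‖(‖x‖ ^ (-α) * ∫ y, f y * (c * ‖x - y‖ ^ (α - (n : ℝ))))‖₊ : ℝ≥0∞) ^ p)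
        ^ (1 / p)
      ≤ (∫⁻ x, (∫⁻ y, K x y * g y) ^ p) ^ (1 / p) := by
        refine ENNReal.rpow_le_rpow (lintegral_mono fun x => ?_) (by positivity)
        exact ENNReal.rpow_le_rpow (hpt x) hp0.le
    _ ≤ (A ^ (p / q) * B * ∫⁻ y, g y ^ p) ^ (1 / p) :=
        ENNReal.rpow_le_rpow hmain (by positivity)
    _ = (A ^ (p / q) * B) ^ (1 / p) * (∫⁻ y, g y ^ p) ^ (1 / p) :=
        ENNReal.mul_rpow_of_nonneg _ _ (by positivity)
    _ ≤ ENNReal.ofReal (((A ^ (p / q) * B) ^ (1 / p)).toReal + 1)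
        * (∫⁻ y, (‖f y‖₊ : ℝ≥0∞) ^ p) ^ (1 / p) := by
        exact mul_le_mul' hCb le_rfl
end
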